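/- arXiv:2512.10816 — 7 statements merged into one kernel-verified Lean document; each statement's English description precedes it below -/
import Mathlib

section
/- The logic C has the Disjunction Property and the Constructible Falsity Property: for all PL-formulas φ, ψ, (i) φ∨ψ ∈ C if and only if φ ∈ C or ψ ∈ C, and (ii) ¬(φ∧ψ) ∈ C if and only if ¬φ ∈ C or ¬ψ ∈ C. -/
/-- Formulas of the propositional language PL. -/
inductive PLForm : Type
  | atom : ℕ → PLForm
  | conj : PLForm → PLForm → PLForm
  | disj : PLForm → PLForm → PLForm
  | impl : PLForm → PLForm → PLForm
  | neg  : PLForm → PLForm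

/-- A bi-valuational propositional Kripke model. -/
structure PropModel where
  W : Type
  nonempty : Nonempty W
  le : W → W → Prop
  le_refl : ∀ w, le w w
  le_trans : ∀ {w v u}, le w v → le v u → le w u
  Vpos : ℕ → W → Prop
  Vneg : ℕ → W → Prop
  Vpos_mono : ∀ (p : ℕ) {w v}, le w v → Vpos p w → Vpos p v
  Vneg_mono : ∀ (p : ℕ) {w v}, le w v → Vneg p w → Vneg p v

/-- `M.sat true φ w` is verification `M,w ⊨⁺ φ`; `M.sat false φ w` is falsification `M,w ⊨⁻ φ`. -/
def PropModel.sat (M : PropModel) : Bool → PLForm → M.W → Prop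
  | true,  .atom p,   w => M.Vpos p w
  | false, .atom p,   w => M.Vneg p w
  | true,  .conj φ ψ, w => M.sat true φ w ∧ M.sat true ψ w
  | false, .conj φ ψ, w => M.sat false φ w ∨ M.sat false ψ w
  | true,  .disj φ ψ, w => M.sat true φ w ∨ M.sat true ψ w
  | false, .disj φ ψ, w => M.sat false φ w ∧ M.sat false ψ w
  | true,  .impl φ ψ, w => ∀ v, M.le w v → M.sat true φ v → M.sat true ψ v
  | false, .impl φ ψ, w => ∀ v, M.le w v → M.sat true φ v → M.sat false ψ v
  | true,  .neg φ,    w => M.sat false φ w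
  | false, .neg φ,    w => M.sat true φ w

/-- C-validity: `φ ∈ C`. -/
def Cvalid (φ : PLForm) : Prop :=
  ∀ (M : PropModel) (w : M.W), M.sat true φ w

/-- The consequence relation of the logic C: `Γ ⊨_C Δ`. -/
def Cconseq (Γ Δ : Set PLForm) : Prop :=
  ∀ (M : PropModel) (w : M.W), (∀ γ ∈ Γ, M.sat true γ w) → ∃ δ ∈ Δ, M.sat true δ w


/-- Persistence: satisfaction (both signs) is upward-monotone. -/
lemma sat_mono (M : PropModel) : ∀ (φ : PLForm) (b : Bool) {w v : M.W},
    M.le w v → M.sat b φ w → M.sat b φ v := by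
  intro φ
  induction φ with
  | atom p =>
    intro b w v h hs
    cases b
    · exact M.Vneg_mono p h hs
    · exact M.Vpos_mono p h hs
  | conj α β ihα ihβ =>
    intro b w v h hs
    cases b
    · exact hs.imp (ihα false h) (ihβ false h)
    · exact ⟨ihα true h hs.1, ihβ true h hs.2⟩
  | disj α β ihα ihβ =>
    intro b w v h hs
    cases b
    · exact ⟨ihα false h hs.1, ihβ false h hs.2⟩
    · exact hs.imp (ihα true h) (ihβ true h)
  | impl α β ihα ihβ =>
    intro b w v h hs
    cases b
    · exact fun u hu ha => hs u (M.le_trans h hu) ha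
    · exact fun u hu ha => hs u (M.le_trans h hu) ha
  | neg α ihα =>
    intro b w v h hs
    cases b
    · exact ihα true h hs
    · exact ihα false h hs

def glueLe (M₁ M₂ : PropModel) : Option (M₁.W ⊕ M₂.W) → Option (M₁.W ⊕ M₂.W) → Prop
  | none, _ => True
  | some (.inl w), some (.inl v) => M₁.le w v
  | some (.inr w), some (.inr v) => M₂.le w v
  | some _, _ => False

def glueV (M₁ M₂ : PropModel) (V₁ : M₁.W → Prop) (V₂ : M₂.W → Prop) :
    Option (M₁.W ⊕ M₂.W) → Prop
  | none => False
  | some (.inl w) => V₁ w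
  | some (.inr w) => V₂ w

/-- Two models glued under a fresh root. -/
def Glue (M₁ M₂ : PropModel) : PropModel where
  W := Option (M₁.W ⊕ M₂.W)
  nonempty := ⟨none⟩
  le := glueLe M₁ M₂
  le_refl w := by
    rcases w with _ | (w | w) <;> simp [glueLe, M₁.le_refl, M₂.le_refl]
  le_trans := by
    intro w v u h1 h2
    rcases w with _ | (w | w) <;> rcases v with _ | (v | v) <;>
      rcases u with _ | (u | u) <;> simp_all [glueLe]
    · exact M₁.le_trans h1 h2
    · exact M₂.le_trans h1 h2
  Vpos p := glueV M₁ M₂ (M₁.Vpos p) (M₂.Vpos p)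
  Vneg p := glueV M₁ M₂ (M₁.Vneg p) (M₂.Vneg p)
  Vpos_mono := by
    intro p w v h hw
    rcases w with _ | (w | w) <;> rcases v with _ | (v | v) <;> simp_all [glueLe, glueV]
    · exact M₁.Vpos_mono p h hw
    · exact M₂.Vpos_mono p h hw
  Vneg_mono := by
    intro p w v h hw
    rcases w with _ | (w | w) <;> rcases v with _ | (v | v) <;> simp_all [glueLe, glueV]
    · exact M₁.Vneg_mono p h hw
    · exact M₂.Vneg_mono p h hw

/-- Satisfaction in the glued model at embedded worlds agrees with the components. -/
lemma sat_glue (M₁ M₂ : PropModel) : ∀ (φ : PLForm) (b : Bool),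
    (∀ w, (Glue M₁ M₂).sat b φ (some (.inl w)) ↔ M₁.sat b φ w) ∧
    (∀ w, (Glue M₁ M₂).sat b φ (some (.inr w)) ↔ M₂.sat b φ w) := by
  intro φ
  induction φ with
  | atom p =>
    intro b; cases b <;> exact ⟨fun w => Iff.rfl, fun w => Iff.rfl⟩
  | conj α β ihα ihβ =>
    intro b
    cases b <;>
      exact ⟨fun w => by simp only [PropModel.sat, (ihα _).1 w, (ihβ _).1 w],
             fun w => by simp only [PropModel.sat, (ihα _).2 w, (ihβ _).2 w]⟩
  | disj α β ihα ihβ =>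
    intro b
    cases b <;>
      exact ⟨fun w => by simp only [PropModel.sat, (ihα _).1 w, (ihβ _).1 w],
             fun w => by simp only [PropModel.sat, (ihα _).2 w, (ihβ _).2 w]⟩
  | impl α β ihα ihβ =>
    intro c
    cases c <;>
    · constructor
      · intro w
        constructor
        · intro H v hv ha
          exact ((ihβ _).1 v).mp (H (some (.inl v)) hv (((ihα true).1 v).mpr ha))
        · intro H v hv ha
          rcases v with _ | (v | v)
          · exact absurd hv (by simp [Glue, glueLe])
          · exact ((ihβ _).1 v).mpr (H v hv (((ihα true).1 v).mp ha))
          · exact absurd hv (by simp [Glue, glueLe])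
      · intro w
        constructor
        · intro H v hv ha
          exact ((ihβ _).2 v).mp (H (some (.inr v)) hv (((ihα true).2 v).mpr ha))
        · intro H v hv ha
          rcases v with _ | (v | v)
          · exact absurd hv (by simp [Glue, glueLe])
          · exact absurd hv (by simp [Glue, glueLe])
          · exact ((ihβ _).2 v).mpr (H v hv (((ihα true).2 v).mp ha))
  | neg α ihα =>
    intro b
    cases b
    · exact ⟨(ihα true).1, (ihα true).2⟩
    · exact ⟨(ihα false).1, (ihα false).2⟩

/-- The key splitting lemma via the rooted-sum construction. -/
lemma split (α β : PLForm)
    (h : ∀ (M : PropModel) (w : M.W), M.sat true α w ∨ M.sat true β w) :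
    Cvalid α ∨ Cvalid β := by
  by_contra hc
  push_neg at hc
  obtain ⟨h₁, h₂⟩ := hc
  simp only [Cvalid, not_forall] at h₁ h₂
  obtain ⟨M₁, w₁, hw₁⟩ := h₁
  obtain ⟨M₂, w₂, hw₂⟩ := h₂
  rcases h (Glue M₁ M₂) none with hα | hβ
  · have := sat_mono (Glue M₁ M₂) α true (w := none) (v := some (.inl w₁)) trivial hα
    exact hw₁ (((sat_glue M₁ M₂ α true).1 w₁).mp this)
  · have := sat_mono (Glue M₁ M₂) β true (w := none) (v := some (.inr w₂)) trivial hβ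
    exact hw₂ (((sat_glue M₁ M₂ β true).2 w₂).mp this)

/-- C has the Disjunction Property and the Constructible Falsity Property. -/
theorem C_DP_and_CFP (φ ψ : PLForm) :
    (Cvalid (PLForm.disj φ ψ) ↔ Cvalid φ ∨ Cvalid ψ) ∧
    (Cvalid (PLForm.neg (PLForm.conj φ ψ)) ↔ Cvalid (PLForm.neg φ) ∨ Cvalid (PLForm.neg ψ)) := by
  constructor
  · constructor
    · intro h
      exact split φ ψ (fun M w => h M w)
    · rintro (h | h) M w
      · exact Or.inl (h M w)
      · exact Or.inr (h M w)
  · constructor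
    · intro h
      exact split (PLForm.neg φ) (PLForm.neg ψ) (fun M w => h M w)
    · rintro (h | h) M w
      · exact Or.inl (h M w)
      · exact Or.inr (h M w)
end

section
/- The implication → is fully hyperconnexive in C: for all PL-formulas φ, ψ, the formulas ¬(¬φ→φ), (φ→¬ψ)→¬(φ→ψ), and ¬(φ→ψ)→(φ→¬ψ) are C-valid, and the consecutions {φ→¬ψ} ⊨_C {¬(φ→ψ)} and {¬(φ→ψ)} ⊨_C {φ→¬ψ} hold; moreover, for distinct atoms p₁, p₂, the formula (p₁→p₂)→(p₂→p₁) is not C-valid and the consecution {p₁→p₂} ⊨_C {p₂→p₁} fails. -/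
/-- STATEMENT 3 helper. -/
def cexM (j : ℕ) : PropModel where
  W := Unit
  nonempty := ⟨()⟩
  le := fun _ _ => True
  le_refl := fun _ => trivial
  le_trans := fun _ _ => trivial
  Vpos := fun p _ => p = j
  Vneg := fun _ _ => False
  Vpos_mono := fun _ {_ _} _ h => h
  Vneg_mono := fun _ {_ _} _ h => h

/-- → is fully hyperconnexive in C. -/
theorem C_impl_fully_hyperconnexive :
    (∀ φ ψ : PLForm,
      Cvalid (PLForm.neg (PLForm.impl (PLForm.neg φ) φ)) ∧
      Cvalid (PLForm.impl (PLForm.impl φ (PLForm.neg ψ)) (PLForm.neg (PLForm.impl φ ψ))) ∧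
      Cvalid (PLForm.impl (PLForm.neg (PLForm.impl φ ψ)) (PLForm.impl φ (PLForm.neg ψ))) ∧
      Cconseq {PLForm.impl φ (PLForm.neg ψ)} {PLForm.neg (PLForm.impl φ ψ)} ∧
      Cconseq {PLForm.neg (PLForm.impl φ ψ)} {PLForm.impl φ (PLForm.neg ψ)}) ∧
    (∀ i j : ℕ, i ≠ j →
      ¬ Cvalid (PLForm.impl (PLForm.impl (PLForm.atom i) (PLForm.atom j))
          (PLForm.impl (PLForm.atom j) (PLForm.atom i))) ∧
      ¬ Cconseq {PLForm.impl (PLForm.atom i) (PLForm.atom j)}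
          {PLForm.impl (PLForm.atom j) (PLForm.atom i)}) := by
  constructor
  · intro φ ψ
    refine ⟨?_, ?_, ?_, ?_, ?_⟩
    · intro M w v _ h; exact h
    · intro M w v _ h; exact h
    · intro M w v _ h; exact h
    · intro M w h
      refine ⟨PLForm.neg (PLForm.impl φ ψ), Set.mem_singleton _, ?_⟩
      exact h (PLForm.impl φ (PLForm.neg ψ)) (Set.mem_singleton _)
    · intro M w h
      refine ⟨PLForm.impl φ (PLForm.neg ψ), Set.mem_singleton _, ?_⟩
      exact h (PLForm.neg (PLForm.impl φ ψ)) (Set.mem_singleton _)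
  · intro i j hij
    constructor
    · intro h
      have := h (cexM j) () () trivial (fun v _ hv => (hij hv).elim) () trivial rfl
      exact hij this.symm.symm
    · intro h
      obtain ⟨δ, hδ, hsat⟩ := h (cexM j) () (by
        rintro γ rfl
        intro v _ hv
        exact (hij hv).elim)
      rw [Set.mem_singleton_iff] at hδ
      subst hδ
      exact hij (hsat () trivial rfl).symm.symm
end

section
/- C is non-trivial and negation-inconsistent: for distinct atoms p₁, p₂ the consecution {p₁→p₂} ⊨_C {p₂→p₁} fails (so C is not the total consequence relation on pairs of sets of PL-formulas), while the formula ((p₁∧¬p₁)→p₁) ∧ ¬((p₁∧¬p₁)→p₁) is C-valid. -/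
/-- C is non-trivial and negation-inconsistent. -/
theorem C_nontrivial_and_negation_inconsistent :
    (∀ i j : ℕ, i ≠ j →
      ¬ Cconseq {PLForm.impl (PLForm.atom i) (PLForm.atom j)}
          {PLForm.impl (PLForm.atom j) (PLForm.atom i)}) ∧
    Cvalid (PLForm.conj
      (PLForm.impl (PLForm.conj (PLForm.atom 0) (PLForm.neg (PLForm.atom 0))) (PLForm.atom 0))
      (PLForm.neg (PLForm.impl (PLForm.conj (PLForm.atom 0) (PLForm.neg (PLForm.atom 0)))
        (PLForm.atom 0)))) := by
  constructor
  · intro i j hij h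
    let M : PropModel :=
      { W := Unit, nonempty := ⟨()⟩, le := fun _ _ => True,
        le_refl := fun _ => trivial, le_trans := fun _ _ => trivial,
        Vpos := fun p _ => p = j, Vneg := fun _ _ => False,
        Vpos_mono := by intro p w v h hp; exact hp, Vneg_mono := by intro p w v h hp; exact hp }
    obtain ⟨δ, hδ, hsat⟩ := h M ()
      (by
        intro γ hγ
        simp only [Set.mem_singleton_iff] at hγ
        subst hγ
        intro v _ _
        exact rfl)
    simp only [Set.mem_singleton_iff] at hδ
    subst hδ
    exact hij (hsat () trivial rfl)
  · intro M w
    refine ⟨fun v _ hv => hv.1, fun v _ hv => hv.2⟩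
end

section
/- The strong implication ⇒ is fully connexive but not hyperconnexive in C: for all PL-formulas φ, ψ, the formulas ¬(¬φ⇒φ) and (φ⇒¬ψ)⇒¬(φ⇒ψ) are C-valid and the consecution {φ⇒¬ψ} ⊨_C {¬(φ⇒ψ)} holds; for distinct atoms p₁, p₂, (p₁⇒p₂)⇒(p₂⇒p₁) is not C-valid and {p₁⇒p₂} ⊨_C {p₂⇒p₁} fails; and for distinct atoms p, q, ¬(p⇒q)⇒(p⇒¬q) is not C-valid and {¬(p⇒q)} ⊨_C {p⇒¬q} fails. -/
/-- Strong implication: `φ ⇒ ψ` abbreviates `(φ→ψ)∧(¬ψ→¬φ)`. -/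
def PLForm.sImp (φ ψ : PLForm) : PLForm :=
  PLForm.conj (PLForm.impl φ ψ) (PLForm.impl (PLForm.neg ψ) (PLForm.neg φ))


/-- One-world countermodel for hyperconnexivity. -/
def M1 (i : ℕ) : PropModel where
  W := PUnit
  nonempty := ⟨⟨⟩⟩
  le _ _ := True
  le_refl _ := trivial
  le_trans _ _ := trivial
  Vpos k _ := k = i
  Vneg _ _ := False
  Vpos_mono := @fun _ _ _ _ h => h
  Vneg_mono := @fun _ _ _ _ h => h.elim

/-- Two-world countermodel for symmetry. -/
def M2 (j : ℕ) : PropModel where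
  W := Bool
  nonempty := ⟨false⟩
  le a b := a = true → b = true
  le_refl _ h := h
  le_trans h1 h2 h := h2 (h1 h)
  Vpos k w := k = j ∧ w = true
  Vneg _ _ := False
  Vpos_mono := @fun _ _ _ h hw => ⟨hw.1, h hw.2⟩
  Vneg_mono := @fun _ _ _ _ h => h.elim

/-- ⇒ is fully connexive but not hyperconnexive in C. -/
theorem C_strong_implication_fully_connexive_not_hyperconnexive :
    (∀ φ ψ : PLForm,
      Cvalid (PLForm.neg (PLForm.sImp (PLForm.neg φ) φ)) ∧
      Cvalid (PLForm.sImp (PLForm.sImp φ (PLForm.neg ψ)) (PLForm.neg (PLForm.sImp φ ψ))) ∧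
      Cconseq {PLForm.sImp φ (PLForm.neg ψ)} {PLForm.neg (PLForm.sImp φ ψ)}) ∧
    (∀ i j : ℕ, i ≠ j →
      ¬ Cvalid (PLForm.sImp (PLForm.sImp (PLForm.atom i) (PLForm.atom j))
          (PLForm.sImp (PLForm.atom j) (PLForm.atom i))) ∧
      ¬ Cconseq {PLForm.sImp (PLForm.atom i) (PLForm.atom j)}
          {PLForm.sImp (PLForm.atom j) (PLForm.atom i)}) ∧
    (∀ i j : ℕ, i ≠ j →
      ¬ Cvalid (PLForm.sImp (PLForm.neg (PLForm.sImp (PLForm.atom i) (PLForm.atom j)))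
          (PLForm.sImp (PLForm.atom i) (PLForm.neg (PLForm.atom j)))) ∧
      ¬ Cconseq {PLForm.neg (PLForm.sImp (PLForm.atom i) (PLForm.atom j))}
          {PLForm.sImp (PLForm.atom i) (PLForm.neg (PLForm.atom j))}) := by
  refine ⟨?_, ?_, ?_⟩
  · intro φ ψ
    refine ⟨?_, ?_, ?_⟩
    · intro M w
      simp only [PLForm.sImp, PropModel.sat]
      exact Or.inl fun v _ h => h
    · intro M w
      simp only [PLForm.sImp, PropModel.sat]
      constructor
      · intro v _ h
        exact Or.inl h.1
      · intro v _ h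
        exact Or.inl h.1
    · intro M w h
      refine ⟨_, rfl, ?_⟩
      have h' := h _ rfl
      simp only [PLForm.sImp, PropModel.sat] at h' ⊢
      exact Or.inl h'.1
  · intro i j hij
    have hsat : (M2 j).sat true (PLForm.sImp (.atom i) (.atom j)) false :=
      ⟨fun _ _ h => absurd h.1 hij, fun _ _ h => h.elim⟩
    have hnot : ¬ (M2 j).sat true (PLForm.sImp (.atom j) (.atom i)) false :=
      fun h => hij (h.1 true (fun _ => rfl) ⟨rfl, rfl⟩).1
    constructor
    · intro hv
      exact hnot ((hv (M2 j) false).1 false (fun h => h) hsat)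
    · intro hc
      obtain ⟨δ, hδ, hs⟩ := hc (M2 j) false (by rintro γ rfl; exact hsat)
      rw [Set.mem_singleton_iff] at hδ
      exact hnot (hδ ▸ hs)
  · intro i j hij
    have hsat : (M1 i).sat true (PLForm.neg (PLForm.sImp (.atom i) (.atom j))) ⟨⟩ :=
      Or.inr fun _ _ h => h.elim
    have hnot : ¬ (M1 i).sat true (PLForm.sImp (.atom i) (PLForm.neg (.atom j))) ⟨⟩ :=
      fun h => h.1 PUnit.unit trivial rfl
    constructor
    · intro hv
      exact hnot ((hv (M1 i) ⟨⟩).1 PUnit.unit trivial hsat)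
    · intro hc
      obtain ⟨δ, hδ, hs⟩ := hc (M1 i) ⟨⟩ (by rintro γ rfl; exact hsat)
      rw [Set.mem_singleton_iff] at hδ
      exact hnot (hδ ▸ hs)
end

section
/- (Strong soundness and completeness of CnK) For all sets Γ, Δ of MD-formulas: Γ ⊨_CnK Δ if and only if Γ ⊢_CnK Δ. In particular, for every MD-formula φ, ⊢_CnK φ if and only if φ ∈ CnK. -/
/-- Formulas of the modal language MD. -/
inductive MDForm : Type
  | atom : ℕ → MDForm
  | conj : MDForm → MDForm → MDForm
  | disj : MDForm → MDForm → MDForm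
  | impl : MDForm → MDForm → MDForm
  | neg  : MDForm → MDForm
  | box  : MDForm → MDForm
  | dia  : MDForm → MDForm

/-- A Fischer–Servi modal model. -/
structure FSModel where
  W : Type
  nonempty : Nonempty W
  le : W → W → Prop
  le_refl : ∀ w, le w w
  le_trans : ∀ {w v u}, le w v → le v u → le w u
  R : W → W → Prop
  fs1 : ∀ {w w' v}, le w w' → R w v → ∃ v', R w' v' ∧ le v v'
  fs2 : ∀ {w v v'}, R w v → le v v' → ∃ w', le w w' ∧ R w' v'
  Vpos : ℕ → W → Prop
  Vneg : ℕ → W → Prop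
  Vpos_mono : ∀ (p : ℕ) {w v}, le w v → Vpos p w → Vpos p v
  Vneg_mono : ∀ (p : ℕ) {w v}, le w v → Vneg p w → Vneg p v

/-- `M.sat true φ w` is verification `M,w ⊨⁺ φ`; `M.sat false φ w` is falsification `M,w ⊨⁻ φ`. -/
def FSModel.sat (M : FSModel) : Bool → MDForm → M.W → Prop
  | true,  .atom p,   w => M.Vpos p w
  | false, .atom p,   w => M.Vneg p w
  | true,  .conj φ ψ, w => M.sat true φ w ∧ M.sat true ψ w
  | false, .conj φ ψ, w => M.sat false φ w ∨ M.sat false ψ w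
  | true,  .disj φ ψ, w => M.sat true φ w ∨ M.sat true ψ w
  | false, .disj φ ψ, w => M.sat false φ w ∧ M.sat false ψ w
  | true,  .impl φ ψ, w => ∀ v, M.le w v → M.sat true φ v → M.sat true ψ v
  | false, .impl φ ψ, w => ∀ v, M.le w v → M.sat true φ v → M.sat false ψ v
  | true,  .neg φ,    w => M.sat false φ w
  | false, .neg φ,    w => M.sat true φ w
  | true,  .box φ,    w => ∀ v, M.le w v → ∀ u, M.R v u → M.sat true φ u
  | false, .box φ,    w => ∀ v, M.le w v → ∀ u, M.R v u → M.sat false φ u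
  | true,  .dia φ,    w => ∃ u, M.R w u ∧ M.sat true φ u
  | false, .dia φ,    w => ∃ u, M.R w u ∧ M.sat false φ u

/-- CnK-validity: `φ ∈ CnK`. -/
def CnKvalid (φ : MDForm) : Prop :=
  ∀ (M : FSModel) (w : M.W), M.sat true φ w

/-- The consequence relation of the logic CnK: `Γ ⊨_CnK Δ`. -/
def CnKconseq (Γ Δ : Set MDForm) : Prop :=
  ∀ (M : FSModel) (w : M.W), (∀ γ ∈ Γ, M.sat true γ w) → ∃ δ ∈ Δ, M.sat true δ w

/-- `φ ↔ ψ` abbreviates `(φ→ψ)∧(ψ→φ)`. -/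
def MDForm.iffF (φ ψ : MDForm) : MDForm :=
  MDForm.conj (MDForm.impl φ ψ) (MDForm.impl ψ φ)

/-- Provability in the Hilbert system CnK. -/
inductive CnKProv : MDForm → Prop
  | a1 (φ ψ : MDForm) : CnKProv (.impl φ (.impl ψ φ))
  | a2 (φ ψ χ : MDForm) :
      CnKProv (.impl (.impl φ (.impl ψ χ)) (.impl (.impl φ ψ) (.impl φ χ)))
  | a3 (φ ψ : MDForm) : CnKProv (.impl (.conj φ ψ) φ)
  | a4 (φ ψ : MDForm) : CnKProv (.impl (.conj φ ψ) ψ)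
  | a5 (φ ψ : MDForm) : CnKProv (.impl φ (.impl ψ (.conj φ ψ)))
  | a6 (φ ψ : MDForm) : CnKProv (.impl φ (.disj φ ψ))
  | a7 (φ ψ : MDForm) : CnKProv (.impl ψ (.disj φ ψ))
  | a8 (φ ψ χ : MDForm) :
      CnKProv (.impl (.impl φ χ) (.impl (.impl ψ χ) (.impl (.disj φ ψ) χ)))
  | a9 (φ : MDForm) : CnKProv (MDForm.iffF (.neg (.neg φ)) φ)
  | a10 (φ ψ : MDForm) :
      CnKProv (MDForm.iffF (.neg (.conj φ ψ)) (.disj (.neg φ) (.neg ψ)))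
  | a11 (φ ψ : MDForm) :
      CnKProv (MDForm.iffF (.neg (.disj φ ψ)) (.conj (.neg φ) (.neg ψ)))
  | a12 (φ ψ : MDForm) :
      CnKProv (MDForm.iffF (.neg (.impl φ ψ)) (.impl φ (.neg ψ)))
  | b1 (φ ψ : MDForm) :
      CnKProv (.impl (.box (.impl φ ψ)) (.impl (.box φ) (.box ψ)))
  | b2 (φ ψ : MDForm) :
      CnKProv (.impl (.box (.impl φ ψ)) (.impl (.dia φ) (.dia ψ)))
  | b3 (φ ψ : MDForm) :
      CnKProv (.impl (.dia (.disj φ ψ)) (.disj (.dia φ) (.dia ψ)))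
  | b4 (φ ψ : MDForm) :
      CnKProv (.impl (.impl (.dia φ) (.box ψ)) (.box (.impl φ ψ)))
  | b5 (φ : MDForm) : CnKProv (MDForm.iffF (.neg (.box φ)) (.box (.neg φ)))
  | b6 (φ : MDForm) : CnKProv (MDForm.iffF (.neg (.dia φ)) (.dia (.neg φ)))
  | mp {φ ψ : MDForm} : CnKProv (.impl φ ψ) → CnKProv φ → CnKProv ψ
  | nec {φ : MDForm} : CnKProv φ → CnKProv (.box φ)

/-- Derivability from premises Γ in CnK: members of Γ, CnK-provable formulas, and modus ponens. -/
inductive CnKDeriv (Γ : Set MDForm) : MDForm → Prop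
  | mem {φ : MDForm} : φ ∈ Γ → CnKDeriv Γ φ
  | prov {φ : MDForm} : CnKProv φ → CnKDeriv Γ φ
  | mp {φ ψ : MDForm} : CnKDeriv Γ (.impl φ ψ) → CnKDeriv Γ φ → CnKDeriv Γ ψ

/-- Disjunction of a nonempty list of formulas. -/
def MDForm.disjList : MDForm → List MDForm → MDForm
  | φ, [] => φ
  | φ, ψ :: l => MDForm.disj φ (MDForm.disjList ψ l)

/-- `Γ ⊢_CnK Δ` : some disjunction of finitely many members of Δ is derivable from Γ. -/
def CnKturnstile (Γ Δ : Set MDForm) : Prop :=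
  ∃ (θ : MDForm) (l : List MDForm), θ ∈ Δ ∧ (∀ χ ∈ l, χ ∈ Δ) ∧
    CnKDeriv Γ (MDForm.disjList θ l)


namespace CnKAux

open MDForm

theorem drv_mono {Γ Γ' : Set MDForm} {φ} (h : Γ ⊆ Γ') : CnKDeriv Γ φ → CnKDeriv Γ' φ := by
  intro hd; induction hd with
  | mem h' => exact .mem (h h')
  | prov h' => exact .prov h'
  | mp _ _ ih1 ih2 => exact .mp ih1 ih2

theorem prv_id (φ : MDForm) : CnKProv (φ.impl φ) :=
  .mp (.mp (.a2 φ (φ.impl φ) φ) (.a1 φ (φ.impl φ))) (.a1 φ φ)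

theorem ded {Γ : Set MDForm} {φ ψ} (h : CnKDeriv (insert φ Γ) ψ) : CnKDeriv Γ (φ.impl ψ) := by
  induction h with
  | @mem χ h' =>
    rcases h' with h' | h'
    · subst h'; exact .prov (prv_id _)
    · exact .mp (.prov (.a1 _ _)) (.mem h')
  | prov h' => exact .mp (.prov (.a1 _ _)) (.prov h')
  | mp _ _ ih1 ih2 => exact .mp (.mp (.prov (.a2 _ _ _)) ih1) ih2

theorem ded' {Γ : Set MDForm} {φ ψ} (h : CnKDeriv Γ (φ.impl ψ)) :
    CnKDeriv (insert φ Γ) ψ :=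
  .mp (drv_mono (Set.subset_insert _ _) h) (.mem (Set.mem_insert _ _))

theorem drv_trans {Γ Γ' : Set MDForm} {ψ} (h : ∀ χ ∈ Γ', CnKDeriv Γ χ)
    (hd : CnKDeriv Γ' ψ) : CnKDeriv Γ ψ := by
  induction hd with
  | mem h' => exact h _ h'
  | prov h' => exact .prov h'
  | mp _ _ ih1 ih2 => exact .mp ih1 ih2

theorem deriv_empty {φ} (h : CnKDeriv ∅ φ) : CnKProv φ := by
  induction h with
  | mem h' => exact absurd h' (Set.notMem_empty _)
  | prov h' => exact h'
  | mp _ _ ih1 ih2 => exact .mp ih1 ih2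

/-- Curried implications from a list of premises. -/
def impList : List MDForm → MDForm → MDForm
  | [], χ => χ
  | b :: l, χ => b.impl (impList l χ)

theorem deriv_unfold {Γ : Set MDForm} {χ} :
    ∀ {l : List MDForm}, CnKDeriv Γ (impList l χ) → (∀ b ∈ l, CnKDeriv Γ b) →
    CnKDeriv Γ χ
  | [], h, _ => h
  | b :: l, h, hb =>
    deriv_unfold (l := l) (.mp h (hb b (List.mem_cons_self)))
      fun c hc => hb c (List.mem_cons_of_mem _ hc)

theorem deriv_fold {χ} : ∀ {l : List MDForm} {Γ : Set MDForm},
    CnKDeriv (Γ ∪ {x | x ∈ l}) χ → CnKDeriv Γ (impList l χ)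
  | [], Γ, h => by
    refine drv_trans (fun ψ hψ => ?_) h
    rcases hψ with h' | h'
    · exact .mem h'
    · simp at h'
  | b :: l, Γ, h => by
    have : CnKDeriv (insert b Γ ∪ {x | x ∈ l}) χ := by
      refine drv_mono (fun x hx => ?_) h
      rcases hx with h' | h'
      · exact Or.inl (Set.mem_insert_of_mem _ h')
      · rcases List.mem_cons.1 h' with rfl | h''
        · exact Or.inl (Set.mem_insert _ _)
        · exact Or.inr h''
    exact ded (deriv_fold this)

theorem compactness {Γ : Set MDForm} {φ} (h : CnKDeriv Γ φ) :
    ∃ l : List MDForm, (∀ b ∈ l, b ∈ Γ) ∧ CnKProv (impList l φ) := by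
  induction h with
  | @mem χ h' =>
    exact ⟨[χ], by simpa using h', prv_id χ⟩
  | prov h' => exact ⟨[], by simp, h'⟩
  | @mp φ ψ _ _ ih1 ih2 =>
    obtain ⟨l₁, hl₁, hp₁⟩ := ih1
    obtain ⟨l₂, hl₂, hp₂⟩ := ih2
    refine ⟨l₁ ++ l₂, fun b hb => ?_, ?_⟩
    · rcases List.mem_append.1 hb with h | h
      · exact hl₁ b h
      · exact hl₂ b h
    · have h1 : CnKDeriv {x | x ∈ l₁ ++ l₂} (φ.impl ψ) := by
        refine deriv_unfold (l := l₁) (.prov hp₁) fun b hb => .mem ?_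
        exact List.mem_append.2 (Or.inl hb)
      have h2 : CnKDeriv {x | x ∈ l₁ ++ l₂} φ := by
        refine deriv_unfold (l := l₂) (.prov hp₂) fun b hb => .mem ?_
        exact List.mem_append.2 (Or.inr hb)
      have h3 : CnKDeriv ((∅ : Set MDForm) ∪ {x | x ∈ l₁ ++ l₂}) ψ :=
        drv_mono (by simp) (.mp h1 h2)
      exact deriv_empty (deriv_fold h3)

theorem prv_fold {l : List MDForm} {χ} (h : CnKDeriv {x | x ∈ l} χ) :
    CnKProv (impList l χ) :=
  deriv_empty (deriv_fold (drv_mono (by simp) h))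

/- natural deduction helpers -/
theorem dand_intro {Γ : Set MDForm} {a b : MDForm} (h1 : CnKDeriv Γ a) (h2 : CnKDeriv Γ b) :
    CnKDeriv Γ (a.conj b) := .mp (.mp (.prov (.a5 _ _)) h1) h2

theorem dand_left {Γ : Set MDForm} {a b : MDForm} (h : CnKDeriv Γ (a.conj b)) : CnKDeriv Γ a :=
  .mp (.prov (.a3 _ _)) h

theorem dand_right {Γ : Set MDForm} {a b : MDForm} (h : CnKDeriv Γ (a.conj b)) : CnKDeriv Γ b :=
  .mp (.prov (.a4 _ _)) h

theorem dor_inl {Γ : Set MDForm} {a : MDForm} (b : MDForm) (h : CnKDeriv Γ a) : CnKDeriv Γ (a.disj b) :=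
  .mp (.prov (.a6 _ _)) h

theorem dor_inr {Γ : Set MDForm} (a : MDForm) {b : MDForm} (h : CnKDeriv Γ b) : CnKDeriv Γ (a.disj b) :=
  .mp (.prov (.a7 _ _)) h

theorem dor_elim {Γ : Set MDForm} {a b c : MDForm} (h : CnKDeriv Γ (a.disj b))
    (h1 : CnKDeriv Γ (a.impl c)) (h2 : CnKDeriv Γ (b.impl c)) : CnKDeriv Γ c :=
  .mp (.mp (.mp (.prov (.a8 _ _ _)) h1) h2) h

theorem dimp_trans {Γ : Set MDForm} {a b c : MDForm} (h1 : CnKDeriv Γ (a.impl b))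
    (h2 : CnKDeriv Γ (b.impl c)) : CnKDeriv Γ (a.impl c) := by
  refine ded (.mp (drv_mono (Set.subset_insert _ _) h2) ?_)
  exact .mp (drv_mono (Set.subset_insert _ _) h1) (.mem (Set.mem_insert _ _))

theorem prv_box_mono {a b : MDForm} (h : CnKProv (a.impl b)) : CnKProv ((box a).impl (box b)) :=
  .mp (.b1 _ _) (.nec h)

theorem prv_dia_mono {a b : MDForm} (h : CnKProv (a.impl b)) : CnKProv ((dia a).impl (dia b)) :=
  .mp (.b2 _ _) (.nec h)


theorem dswap {Γ : Set MDForm} {b c X : MDForm} (h : CnKDeriv Γ (b.impl (c.impl X))) :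
    CnKDeriv Γ (c.impl (b.impl X)) := by
  apply ded; apply ded
  have hh : CnKDeriv (insert b (insert c Γ)) (b.impl (c.impl X)) := drv_mono
    (fun x hx => Set.mem_insert_of_mem _ (Set.mem_insert_of_mem _ hx)) h
  exact .mp (.mp hh (.mem (Set.mem_insert _ _)))
    (.mem (Set.mem_insert_of_mem _ (Set.mem_insert _ _)))

theorem dimp_imp {Γ : Set MDForm} {b X Y : MDForm} (h : CnKDeriv Γ (X.impl Y)) :
    CnKDeriv Γ ((b.impl X).impl (b.impl Y)) := by
  apply ded; apply ded
  have hh : CnKDeriv (insert b (insert (b.impl X) Γ)) (X.impl Y) := drv_mono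
    (fun x hx => Set.mem_insert_of_mem _ (Set.mem_insert_of_mem _ hx)) h
  refine .mp hh (.mp (.mem (Set.mem_insert_of_mem _ (Set.mem_insert _ _)))
    (.mem (Set.mem_insert _ _)))

theorem prv_imp_trans {a b c : MDForm} (h1 : CnKProv (a.impl b)) (h2 : CnKProv (b.impl c)) :
    CnKProv (a.impl c) := deriv_empty (dimp_trans (.prov h1) (.prov h2))

theorem prv_swap {b c X : MDForm} : CnKProv ((b.impl (c.impl X)).impl (c.impl (b.impl X))) :=
  deriv_empty (ded (dswap (.mem (Set.mem_insert _ _))))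

theorem prv_imp_imp {b X Y : MDForm} (h : CnKProv (X.impl Y)) :
    CnKProv ((b.impl X).impl (b.impl Y)) := deriv_empty (dimp_imp (.prov h))


theorem prv_exch {b A : MDForm} : ∀ {l : List MDForm},
    CnKProv ((b.impl (impList l A)).impl (impList l (b.impl A)))
  | [] => prv_id _
  | c :: l => by
    have h1 : CnKProv ((b.impl (c.impl (impList l A))).impl
        (c.impl (b.impl (impList l A)))) := prv_swap
    have h2 : CnKProv ((c.impl (b.impl (impList l A))).impl
        (c.impl (impList l (b.impl A)))) := prv_imp_imp prv_exch
    exact prv_imp_trans h1 h2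

theorem imp_impList_mono {A B : MDForm} (h : CnKProv (A.impl B)) :
    ∀ {l : List MDForm}, CnKProv ((impList l A).impl (impList l B))
  | [] => h
  | c :: l => prv_imp_imp (imp_impList_mono h)

theorem prv_uncurry {σ b X : MDForm} (h : CnKProv (σ.impl (b.impl X))) :
    CnKProv ((σ.conj b).impl X) := by
  apply deriv_empty; apply ded
  have hm : CnKDeriv (insert (σ.conj b) ∅) (σ.conj b) := .mem (Set.mem_insert _ _)
  exact .mp (.mp (.prov h) (dand_left hm)) (dand_right hm)

theorem prv_box_impList {χ : MDForm} : ∀ {l : List MDForm} {ρ : MDForm},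
    CnKProv (ρ.impl (impList l χ)) →
    CnKProv ((box ρ).impl (impList (l.map box) (box χ)))
  | [], ρ, h => prv_box_mono h
  | a :: l, ρ, h => by
    have h1 : CnKProv ((ρ.conj a).impl (impList l χ)) := prv_uncurry h
    have ih : CnKProv ((box (ρ.conj a)).impl (impList (l.map box) (box χ))) :=
      prv_box_impList h1
    have t1 : CnKProv ((box ρ).impl (box (a.impl (ρ.conj a)))) :=
      prv_box_mono (.a5 _ _)
    have t2 : CnKProv ((box (a.impl (ρ.conj a))).impl
        ((box a).impl (box (ρ.conj a)))) := .b1 _ _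
    have t3 : CnKProv ((box ρ).impl ((box a).impl (box (ρ.conj a)))) :=
      prv_imp_trans t1 t2
    exact prv_imp_trans t3 (prv_imp_imp ih)

theorem prv_impList_of_prv {χ : MDForm} (h : CnKProv χ) :
    ∀ {l : List MDForm}, CnKProv (impList l χ)
  | [] => h
  | _ :: _ => .mp (.a1 _ _) (prv_impList_of_prv h)

theorem prv_dia_imp_elim {b ρ : MDForm} :
    CnKProv ((box b).impl ((dia (b.impl ρ)).impl (dia ρ))) := by
  have t0 : CnKProv (b.impl ((b.impl ρ).impl ρ)) := by
    apply deriv_empty; apply ded; apply ded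
    exact .mp (.mem (Set.mem_insert _ _))
      (.mem (Set.mem_insert_of_mem _ (Set.mem_insert _ _)))
  exact prv_imp_trans (prv_box_mono t0) (.b2 _ _)

/-- Encoding of formulas into ℕ. -/
def enc : MDForm → ℕ
  | .atom n => Nat.pair 0 n
  | .conj a b => Nat.pair 1 (Nat.pair (enc a) (enc b))
  | .disj a b => Nat.pair 2 (Nat.pair (enc a) (enc b))
  | .impl a b => Nat.pair 3 (Nat.pair (enc a) (enc b))
  | .neg a => Nat.pair 4 (enc a)
  | .box a => Nat.pair 5 (enc a)
  | .dia a => Nat.pair 6 (enc a)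

theorem enc_inj : Function.Injective enc := by
  intro a
  induction a with
  | atom n =>
    intro b h; cases b <;> simp [enc, Nat.pair_eq_pair] at h
    rw [h]
  | conj a₁ a₂ ih1 ih2 =>
    intro b h; cases b <;> simp [enc, Nat.pair_eq_pair] at h
    rw [ih1 h.1, ih2 h.2]
  | disj a₁ a₂ ih1 ih2 =>
    intro b h; cases b <;> simp [enc, Nat.pair_eq_pair] at h
    rw [ih1 h.1, ih2 h.2]
  | impl a₁ a₂ ih1 ih2 =>
    intro b h; cases b <;> simp [enc, Nat.pair_eq_pair] at h
    rw [ih1 h.1, ih2 h.2]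
  | neg a ih =>
    intro b h; cases b <;> simp [enc, Nat.pair_eq_pair] at h
    rw [ih h]
  | box a ih =>
    intro b h; cases b <;> simp [enc, Nat.pair_eq_pair] at h
    rw [ih h]
  | dia a ih =>
    intro b h; cases b <;> simp [enc, Nat.pair_eq_pair] at h
    rw [ih h]

instance : Countable MDForm := ⟨⟨enc, enc_inj⟩⟩
instance : Nonempty MDForm := ⟨.atom 0⟩


def Closed (T : Set MDForm) : Prop := ∀ φ, CnKDeriv T φ → φ ∈ T

def Primey (T : Set MDForm) : Prop := ∀ φ ψ : MDForm, φ.disj ψ ∈ T → φ ∈ T ∨ ψ ∈ T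

open Classical in
/-- The Lindenbaum chain. -/
noncomputable def chainF (B : Set MDForm) (P : MDForm → Prop) (e : ℕ → MDForm) :
    ℕ → Set MDForm
  | 0 => B
  | n + 1 =>
    if ∀ χ, P χ → ¬ CnKDeriv (insert (e n) (chainF B P e n)) χ then
      insert (e n) (chainF B P e n)
    else chainF B P e n

open Classical in
theorem chainF_succ (B P e n) : chainF B P e (n+1) =
    if ∀ χ, P χ → ¬ CnKDeriv (insert (e n) (chainF B P e n)) χ then
      insert (e n) (chainF B P e n)
    else chainF B P e n := rfl

theorem chainF_step {B P e n} : chainF B P e n ⊆ chainF B P e (n+1) := by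
  rw [chainF_succ]
  split
  · exact Set.subset_insert _ _
  · exact subset_rfl

theorem chainF_mono {B P e} : ∀ {m n : ℕ}, m ≤ n → chainF B P e m ⊆ chainF B P e n := by
  intro m n h
  induction n, h using Nat.le_induction with
  | base => exact subset_rfl
  | succ n _ ih => exact subset_trans ih chainF_step

theorem chainF_bad_free {B P e} (h1 : ∀ χ, P χ → ¬ CnKDeriv B χ) :
    ∀ n, ∀ χ, P χ → ¬ CnKDeriv (chainF B P e n) χ := by
  intro n
  induction n with
  | zero => exact h1
  | succ n ih =>
    rw [chainF_succ]
    split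
    · assumption
    · exact ih

theorem union_drv {B P e χ} (h : CnKDeriv (⋃ n, chainF B P e n) χ) :
    ∃ n, CnKDeriv (chainF B P e n) χ := by
  obtain ⟨l, hl, hp⟩ := compactness h
  have : ∃ n, ∀ b ∈ l, b ∈ chainF B P e n := by
    clear hp
    induction l with
    | nil => exact ⟨0, by simp⟩
    | cons a l ih =>
      obtain ⟨n, hn⟩ := ih fun b hb => hl b (List.mem_cons_of_mem _ hb)
      obtain ⟨m, hm⟩ := Set.mem_iUnion.1 (hl a (List.mem_cons_self))
      refine ⟨max m n, fun b hb => ?_⟩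
      rcases List.mem_cons.1 hb with rfl | hb
      · exact chainF_mono (le_max_left _ _) hm
      · exact chainF_mono (le_max_right _ _) (hn b hb)
  obtain ⟨n, hn⟩ := this
  exact ⟨n, deriv_unfold (.prov hp) fun b hb => .mem (hn b hb)⟩

theorem lindenbaum (B : Set MDForm) (P : MDForm → Prop)
    (h1 : ∀ χ, P χ → ¬ CnKDeriv B χ)
    (h2 : ∀ χ₁ χ₂, P χ₁ → P χ₂ →
      ∃ χ₃, P χ₃ ∧ CnKProv ((χ₁.disj χ₂).impl χ₃)) :
    ∃ T, B ⊆ T ∧ Closed T ∧ Primey T ∧ ∀ χ, P χ → ¬ CnKDeriv T χ := by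
  obtain ⟨e, he⟩ := exists_surjective_nat MDForm
  set U := ⋃ n, chainF B P e n with hU
  have hUdrv : ∀ {φ}, CnKDeriv {φ | CnKDeriv U φ} φ → CnKDeriv U φ := by
    intro φ h; exact drv_trans (fun χ hχ => hχ) h
  have hbadU : ∀ χ, P χ → ¬ CnKDeriv U χ := by
    intro χ hχ hd
    obtain ⟨n, hn⟩ := union_drv hd
    exact chainF_bad_free h1 n χ hχ hn
  refine ⟨{φ | CnKDeriv U φ}, ?_, ?_, ?_, ?_⟩
  · intro φ hφ
    exact .mem (Set.mem_iUnion.2 ⟨0, hφ⟩)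
  · intro φ h
    exact hUdrv h
  · intro φ ψ hdisj
    by_contra hcon
    push_neg at hcon
    obtain ⟨hφ, hψ⟩ := hcon
    have reject : ∀ χ : MDForm, (¬ CnKDeriv U χ) →
        ∃ χ', P χ' ∧ CnKDeriv (insert χ U) χ' := by
      intro χ hχ
      obtain ⟨m, rfl⟩ := he χ
      have hnotmem : e m ∉ chainF B P e (m+1) := by
        intro hmem
        exact hχ (.mem (Set.mem_iUnion.2 ⟨m+1, hmem⟩))
      have : ¬ ∀ χ', P χ' → ¬ CnKDeriv (insert (e m) (chainF B P e m)) χ' := by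
        intro hall
        apply hnotmem
        rw [chainF_succ, if_pos hall]
        exact Set.mem_insert _ _
      push_neg at this
      obtain ⟨χ', hχ', hd⟩ := this
      exact ⟨χ', hχ', drv_mono (Set.insert_subset_insert
        (fun x hx => Set.mem_iUnion.2 ⟨m, hx⟩)) hd⟩
    obtain ⟨χ₁, hP1, hd1⟩ := reject φ hφ
    obtain ⟨χ₂, hP2, hd2⟩ := reject ψ hψ
    obtain ⟨χ₃, hP3, hp3⟩ := h2 χ₁ χ₂ hP1 hP2
    have himp1 : CnKDeriv U (φ.impl (χ₁.disj χ₂)) :=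
      dimp_trans (ded hd1) (.prov (.a6 _ _))
    have himp2 : CnKDeriv U (ψ.impl (χ₁.disj χ₂)) :=
      dimp_trans (ded hd2) (.prov (.a7 _ _))
    have hor : CnKDeriv U (φ.disj ψ) := hdisj
    exact hbadU χ₃ hP3 (.mp (.prov hp3) (dor_elim hor himp1 himp2))
  · intro χ hχ hd
    exact hbadU χ hχ (hUdrv hd)


def canonR (T S : Set MDForm) : Prop :=
  (∀ φ, MDForm.box φ ∈ T → φ ∈ S) ∧ (∀ φ, φ ∈ S → MDForm.dia φ ∈ T)

theorem prv_or_idem (φ : MDForm) : CnKProv ((φ.disj φ).impl φ) :=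
  deriv_empty (ded (dor_elim (.mem (Set.mem_insert _ _))
    (.prov (prv_id _)) (.prov (prv_id _))))

theorem mem_of_prv_iff {T : Set MDForm} {A B : MDForm} (hT : Closed T)
    (h : CnKProv (MDForm.iffF A B)) : A ∈ T ↔ B ∈ T := by
  constructor
  · intro hA; exact hT _ (.mp (dand_left (.prov h)) (.mem hA))
  · intro hB; exact hT _ (.mp (dand_right (.prov h)) (.mem hB))

theorem closed_mem_of_prv {T : Set MDForm} (hT : Closed T) {φ : MDForm}
    (h : CnKProv φ) : φ ∈ T := hT _ (.prov h)

/-- Key claim for the diamond-side saturation. -/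
theorem dia_side_claim {T S₀ : Set MDForm} (hTc : Closed T) (hS₀ : Closed S₀)
    (hdia : ∀ σ ∈ S₀, dia σ ∈ T) :
    ∀ l : List MDForm, (∀ b ∈ l, b ∈ S₀ ∨ box b ∈ T) →
      ∀ χ σ, σ ∈ S₀ → CnKProv (σ.impl (impList l χ)) → dia χ ∈ T := by
  intro l
  induction l with
  | nil =>
    intro _ χ σ hσ h
    exact hTc _ (.mp (.prov (prv_dia_mono h)) (.mem (hdia σ hσ)))
  | cons b l ih =>
    intro hb χ σ hσ h
    rcases hb b (List.mem_cons_self) with hbS | hbT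
    · have hσ' : σ.conj b ∈ S₀ := hS₀ _ (dand_intro (.mem hσ) (.mem hbS))
      exact ih (fun c hc => hb c (List.mem_cons_of_mem _ hc)) χ _ hσ' (prv_uncurry h)
    · have h' : CnKProv (σ.impl (impList l (b.impl χ))) :=
        prv_imp_trans h prv_exch
      have hd : dia (b.impl χ) ∈ T :=
        ih (fun c hc => hb c (List.mem_cons_of_mem _ hc)) _ _ hσ h'
      exact hTc _ (.mp (.mp (.prov prv_dia_imp_elim) (.mem hbT)) (.mem hd))

theorem dia_side {T S₀ : Set MDForm} (hTc : Closed T) (hTp : Primey T)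
    (hS₀ : Closed S₀) (hdia : ∀ σ ∈ S₀, dia σ ∈ T) :
    ∃ U, Closed U ∧ Primey U ∧ S₀ ⊆ U ∧ canonR T U := by
  have hmain := lindenbaum (S₀ ∪ {ψ | MDForm.box ψ ∈ T}) (fun χ => dia χ ∉ T)
    (by
      intro χ hχ hd
      obtain ⟨l, hl, hp⟩ := compactness hd
      have hσ₀ : ((atom 0).impl (atom 0)) ∈ S₀ := closed_mem_of_prv hS₀ (prv_id _)
      refine hχ (dia_side_claim hTc hS₀ hdia l ?_ χ _ hσ₀ (.mp (.a1 _ _) hp))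
      intro b hbl
      exact hl b hbl)
    (by
      intro χ₁ χ₂ h₁ h₂
      refine ⟨χ₁.disj χ₂, ?_, prv_id _⟩
      intro hdd
      have : (dia χ₁).disj (dia χ₂) ∈ T := hTc _ (.mp (.prov (.b3 _ _)) (.mem hdd))
      rcases hTp _ _ this with h | h
      · exact h₁ h
      · exact h₂ h)
  obtain ⟨U, hBU, hUc, hUp, hbad⟩ := hmain
  refine ⟨U, hUc, hUp, fun σ hσ => hBU (Or.inl hσ), ?_, ?_⟩
  · intro φ hφ
    exact hBU (Or.inr hφ)
  · intro φ hφ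
    by_contra hdia'
    exact hbad φ hdia' (.mem hφ)

/-- Key claim for the box-side. -/
theorem box_compat_claim {T U : Set MDForm} (hTc : Closed T) (hUc : Closed U) :
    ∀ l : List MDForm, (∀ b ∈ l, b ∈ T ∨ ∃ u ∈ U, b = dia u) →
      ∀ χ ψ, ψ ∈ U → CnKDeriv T (impList l ((dia ψ).impl (box χ))) →
      ∃ ψ' ∈ U, CnKDeriv T ((dia ψ').impl (box χ)) := by
  intro l
  induction l with
  | nil => intro _ χ ψ hψ h; exact ⟨ψ, hψ, h⟩
  | cons b l ih =>
    intro hb χ ψ hψ h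
    rcases hb b (List.mem_cons_self) with hbT | ⟨u, huU, rfl⟩
    · exact ih (fun c hc => hb c (List.mem_cons_of_mem _ hc)) χ ψ hψ (.mp h (.mem hbT))
    · have hperm : CnKDeriv T (impList l ((dia u).impl ((dia ψ).impl (box χ)))) :=
        .mp (.prov prv_exch) h
      have key : CnKProv (((dia u).impl ((dia ψ).impl (box χ))).impl
          ((dia (u.conj ψ)).impl (box χ))) := by
        apply deriv_empty; apply ded; apply ded
        have hm1 : CnKDeriv (insert (dia (u.conj ψ))
            (insert ((dia u).impl ((dia ψ).impl (box χ))) ∅)) (dia (u.conj ψ)) :=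
          .mem (Set.mem_insert _ _)
        have hm2 : CnKDeriv (insert (dia (u.conj ψ))
            (insert ((dia u).impl ((dia ψ).impl (box χ))) ∅))
            ((dia u).impl ((dia ψ).impl (box χ))) :=
          .mem (Set.mem_insert_of_mem _ (Set.mem_insert _ _))
        exact .mp (.mp hm2 (.mp (.prov (prv_dia_mono (.a3 _ _))) hm1))
          (.mp (.prov (prv_dia_mono (.a4 _ _))) hm1)
      have h2 : CnKDeriv T (impList l ((dia (u.conj ψ)).impl (box χ))) :=
        .mp (.prov (imp_impList_mono key)) hperm
      have huψ : u.conj ψ ∈ U := hUc _ (dand_intro (.mem huU) (.mem hψ))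
      exact ih (fun c hc => hb c (List.mem_cons_of_mem _ hc)) χ _ huψ h2

theorem box_compat {T U : Set MDForm} (hTc : Closed T) (hUc : Closed U)
    (hbox : ∀ χ, MDForm.box χ ∈ T → χ ∈ U) :
    ∀ χ, CnKDeriv (T ∪ {x | ∃ ψ ∈ U, x = dia ψ}) (box χ) → χ ∈ U := by
  intro χ hd
  obtain ⟨l, hl, hp⟩ := compactness hd
  have hψ₀ : ((atom 0).impl (atom 0)) ∈ U := closed_mem_of_prv hUc (prv_id _)
  have hp' : CnKProv (impList l ((dia ((atom 0).impl (atom 0))).impl (box χ))) :=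
    .mp (imp_impList_mono (.a1 _ _)) hp
  obtain ⟨ψ', hψ', himp⟩ := box_compat_claim hTc hUc l hl χ _ hψ₀ (.prov hp')
  have hb4 : CnKDeriv T (box (ψ'.impl χ)) := .mp (.prov (.b4 _ _)) himp
  have : ψ'.impl χ ∈ U := hbox _ (hTc _ hb4)
  exact hUc _ (.mp (.mem this) (.mem hψ'))

theorem box_side {T U : Set MDForm} (hTc : Closed T) (hUc : Closed U) (hUp : Primey U)
    (hbox : ∀ χ, MDForm.box χ ∈ T → χ ∈ U) :
    ∃ T', T ⊆ T' ∧ Closed T' ∧ Primey T' ∧ canonR T' U := by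
  have hmain := lindenbaum (T ∪ {x | ∃ ψ ∈ U, x = dia ψ})
    (fun χ => ∃ ρ, ρ ∉ U ∧ χ = box ρ)
    (by
      rintro χ ⟨ρ, hρ, rfl⟩ hd
      exact hρ (box_compat hTc hUc hbox ρ hd))
    (by
      rintro _ _ ⟨ρ₁, hρ₁, rfl⟩ ⟨ρ₂, hρ₂, rfl⟩
      refine ⟨box (ρ₁.disj ρ₂), ⟨ρ₁.disj ρ₂, ?_, rfl⟩, ?_⟩
      · intro hmem
        rcases hUp _ _ hmem with h | h
        · exact hρ₁ h
        · exact hρ₂ h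
      · exact deriv_empty (ded (dor_elim (.mem (Set.mem_insert _ _))
          (.prov (prv_box_mono (.a6 _ _))) (.prov (prv_box_mono (.a7 _ _)))))
      )
  obtain ⟨T', hBT', hT'c, hT'p, hbad⟩ := hmain
  refine ⟨T', fun x hx => hBT' (Or.inl hx), hT'c, hT'p, ?_, ?_⟩
  · intro φ hφ
    by_contra hφU
    exact hbad (box φ) ⟨φ, hφU, rfl⟩ (.mem hφ)
  · intro φ hφ
    exact hBT' (Or.inr ⟨φ, hφ, rfl⟩)


theorem impl_side {T : Set MDForm} (hTc : Closed T) {φ ψ : MDForm}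
    (h : φ.impl ψ ∉ T) :
    ∃ S, Closed S ∧ Primey S ∧ T ⊆ S ∧ φ ∈ S ∧ ψ ∉ S := by
  have hmain := lindenbaum (insert φ T) (fun χ => χ = ψ)
    (by
      rintro χ rfl hd
      exact h (hTc _ (ded hd)))
    (by
      intro χ₁ χ₂ h₁ h₂
      subst h₁; subst h₂
      exact ⟨_, rfl, prv_or_idem _⟩)
  obtain ⟨S, hBS, hSc, hSp, hbad⟩ := hmain
  refine ⟨S, hSc, hSp, fun x hx => hBS (Set.mem_insert_of_mem _ hx),
    hBS (Set.mem_insert _ _), ?_⟩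
  intro hψ
  exact hbad ψ rfl (.mem hψ)

theorem boxinv_lemma {T : Set MDForm} (hTc : Closed T) {φ : MDForm}
    (h : box φ ∉ T) :
    ∃ U, Closed U ∧ Primey U ∧ (∀ ψ, box ψ ∈ T → ψ ∈ U) ∧ φ ∉ U := by
  have hmain := lindenbaum {ψ | MDForm.box ψ ∈ T} (fun χ => χ = φ)
    (by
      rintro χ rfl hd
      obtain ⟨l, hl, hp⟩ := compactness hd
      have hbox0 : box ((atom 0).impl (atom 0)) ∈ T :=
        hTc _ (.prov (.nec (prv_id _)))
      have hp2 : CnKProv ((box ((atom 0).impl (atom 0))).impl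
          (impList (l.map box) (box χ))) := prv_box_impList (.mp (.a1 _ _) hp)
      have hd2 : CnKDeriv T (impList (l.map box) (box χ)) :=
        .mp (.prov hp2) (.mem hbox0)
      have hd3 : CnKDeriv T (box χ) := by
        refine deriv_unfold hd2 fun b hb => ?_
        obtain ⟨b', hb', rfl⟩ := List.mem_map.1 hb
        exact .mem (hl b' hb')
      exact h (hTc _ hd3))
    (by
      intro χ₁ χ₂ h₁ h₂
      subst h₁; subst h₂
      exact ⟨_, rfl, prv_or_idem _⟩)
  obtain ⟨U, hBU, hUc, hUp, hbad⟩ := hmain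
  refine ⟨U, hUc, hUp, fun ψ hψ => hBU hψ, ?_⟩
  intro hφ
  exact hbad φ rfl (.mem hφ)

theorem diainv_lemma {T : Set MDForm} (hTc : Closed T) (hTp : Primey T)
    {φ : MDForm} (h : dia φ ∈ T) :
    ∃ U, Closed U ∧ Primey U ∧ φ ∈ U ∧ canonR T U := by
  have hS₀c : Closed {σ | CnKDeriv {φ} σ} := by
    intro σ hσ
    exact drv_trans (fun χ hχ => hχ) hσ
  have hdia : ∀ σ ∈ {σ | CnKDeriv {φ} σ}, dia σ ∈ T := by
    intro σ hσ
    have hφσ : CnKProv (φ.impl σ) := by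
      refine deriv_empty (ded (drv_mono ?_ hσ))
      intro x hx
      rcases hx with rfl
      exact Set.mem_insert _ _
    exact hTc _ (.mp (.prov (prv_dia_mono hφσ)) (.mem h))
  obtain ⟨U, hUc, hUp, hSU, hcr⟩ := dia_side hTc hTp hS₀c hdia
  exact ⟨U, hUc, hUp, hSU (.mem rfl), hcr⟩

/-- Worlds of the canonical model. -/
def CWorld : Type := {T : Set MDForm // Closed T ∧ Primey T}

/-- The canonical Fischer–Servi model. -/
noncomputable def canon : FSModel where
  W := CWorld
  nonempty := ⟨⟨Set.univ, fun _ _ => trivial, fun _ _ _ => Or.inl trivial⟩⟩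
  le T S := T.1 ⊆ S.1
  le_refl _ := subset_rfl
  le_trans h1 h2 := subset_trans h1 h2
  R T S := canonR T.1 S.1
  fs1 := by
    intro T T' S hle hR
    obtain ⟨U, hUc, hUp, hSU, hcr⟩ := dia_side T'.2.1 T'.2.2 S.2.1
      (fun σ hσ => hle (hR.2 σ hσ))
    exact ⟨⟨U, hUc, hUp⟩, hcr, hSU⟩
  fs2 := by
    intro T S S' hR hle
    obtain ⟨T', hTT', hT'c, hT'p, hcr⟩ := box_side T.2.1 S'.2.1 S'.2.2
      (fun χ hχ => hle (hR.1 χ hχ))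
    exact ⟨⟨T', hT'c, hT'p⟩, hTT', hcr⟩
  Vpos p T := MDForm.atom p ∈ T.1
  Vneg p T := MDForm.neg (MDForm.atom p) ∈ T.1
  Vpos_mono := by intro p w v h hm; exact h hm
  Vneg_mono := by intro p w v h hm; exact h hm


theorem impl_mem_char {T : CWorld} {φ ψ : MDForm} :
    (∀ S : CWorld, T.1 ⊆ S.1 → φ ∈ S.1 → ψ ∈ S.1) ↔ φ.impl ψ ∈ T.1 := by
  constructor
  · intro h
    by_contra hni
    obtain ⟨S, hSc, hSp, hTS, hφ, hψ⟩ := impl_side T.2.1 hni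
    exact hψ (h ⟨S, hSc, hSp⟩ hTS hφ)
  · intro h S hTS hφ
    exact S.2.1 _ (.mp (.mem (hTS h)) (.mem hφ))

theorem box_mem_char {T : CWorld} {φ : MDForm} :
    (∀ v u : CWorld, T.1 ⊆ v.1 → canonR v.1 u.1 → φ ∈ u.1) ↔ box φ ∈ T.1 := by
  constructor
  · intro h
    by_contra hnb
    obtain ⟨U, hUc, hUp, hbx, hφ⟩ := boxinv_lemma T.2.1 hnb
    obtain ⟨T', hTT', hT'c, hT'p, hcr⟩ := box_side T.2.1 hUc hUp hbx
    exact hφ (h ⟨T', hT'c, hT'p⟩ ⟨U, hUc, hUp⟩ hTT' hcr)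
  · intro h v u hTv hcr
    exact hcr.1 _ (hTv h)

theorem dia_mem_char {T : CWorld} {φ : MDForm} :
    (∃ u : CWorld, canonR T.1 u.1 ∧ φ ∈ u.1) ↔ dia φ ∈ T.1 := by
  constructor
  · rintro ⟨u, hcr, hφ⟩; exact hcr.2 _ hφ
  · intro h
    obtain ⟨U, hUc, hUp, hφ, hcr⟩ := diainv_lemma T.2.1 T.2.2 h
    exact ⟨⟨U, hUc, hUp⟩, hcr, hφ⟩

theorem truth_lemma : ∀ (φ : MDForm) (T : CWorld),
    (canon.sat true φ T ↔ φ ∈ T.1) ∧ (canon.sat false φ T ↔ MDForm.neg φ ∈ T.1) := by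
  intro φ
  induction φ with
  | atom p => intro T; exact ⟨Iff.rfl, Iff.rfl⟩
  | conj φ ψ ih1 ih2 =>
    intro T
    obtain ⟨i1t, i1f⟩ := ih1 T
    obtain ⟨i2t, i2f⟩ := ih2 T
    constructor
    · simp only [FSModel.sat]
      constructor
      · rintro ⟨h1, h2⟩
        exact T.2.1 _ (dand_intro (.mem (i1t.1 h1)) (.mem (i2t.1 h2)))
      · intro h
        exact ⟨i1t.2 (T.2.1 _ (dand_left (.mem h))),
          i2t.2 (T.2.1 _ (dand_right (.mem h)))⟩
    · simp only [FSModel.sat]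
      constructor
      · rintro (h | h)
        · exact T.2.1 _ (.mp (dand_right (.prov (.a10 φ ψ)))
            (dor_inl _ (.mem (i1f.1 h))))
        · exact T.2.1 _ (.mp (dand_right (.prov (.a10 φ ψ)))
            (dor_inr _ (.mem (i2f.1 h))))
      · intro h
        have hd : (neg φ).disj (neg ψ) ∈ T.1 :=
          T.2.1 _ (.mp (dand_left (.prov (.a10 φ ψ))) (.mem h))
        rcases T.2.2 _ _ hd with h' | h'
        · exact Or.inl (i1f.2 h')
        · exact Or.inr (i2f.2 h')
  | disj φ ψ ih1 ih2 =>
    intro T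
    obtain ⟨i1t, i1f⟩ := ih1 T
    obtain ⟨i2t, i2f⟩ := ih2 T
    constructor
    · simp only [FSModel.sat]
      constructor
      · rintro (h | h)
        · exact T.2.1 _ (dor_inl _ (.mem (i1t.1 h)))
        · exact T.2.1 _ (dor_inr _ (.mem (i2t.1 h)))
      · intro h
        rcases T.2.2 _ _ h with h' | h'
        · exact Or.inl (i1t.2 h')
        · exact Or.inr (i2t.2 h')
    · simp only [FSModel.sat]
      constructor
      · rintro ⟨h1, h2⟩
        exact T.2.1 _ (.mp (dand_right (.prov (.a11 φ ψ)))
          (dand_intro (.mem (i1f.1 h1)) (.mem (i2f.1 h2))))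
      · intro h
        have hc : (neg φ).conj (neg ψ) ∈ T.1 :=
          T.2.1 _ (.mp (dand_left (.prov (.a11 φ ψ))) (.mem h))
        exact ⟨i1f.2 (T.2.1 _ (dand_left (.mem hc))),
          i2f.2 (T.2.1 _ (dand_right (.mem hc)))⟩
  | impl φ ψ ih1 ih2 =>
    intro T
    constructor
    · simp only [FSModel.sat]
      constructor
      · intro h
        refine impl_mem_char.1 fun S hTS hφ => ?_
        exact (ih2 S).1.1 (h S hTS ((ih1 S).1.2 hφ))
      · intro h v hTv hφ
        exact (ih2 v).1.2 (impl_mem_char.2 h v hTv ((ih1 v).1.1 hφ))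
    · simp only [FSModel.sat]
      constructor
      · intro h
        refine (mem_of_prv_iff T.2.1 (.a12 φ ψ)).2
          (impl_mem_char.1 fun S hTS hφ => ?_)
        exact (ih2 S).2.1 (h S hTS ((ih1 S).1.2 hφ))
      · intro h v hTv hφ
        have h' : φ.impl (neg ψ) ∈ T.1 := (mem_of_prv_iff T.2.1 (.a12 φ ψ)).1 h
        exact (ih2 v).2.2 (impl_mem_char.2 h' v hTv ((ih1 v).1.1 hφ))
  | neg φ ih =>
    intro T
    refine ⟨(ih T).2, ?_⟩
    have : canon.sat false (neg φ) T ↔ canon.sat true φ T := Iff.rfl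
    rw [this, (ih T).1]
    exact (mem_of_prv_iff T.2.1 (.a9 φ)).symm
  | box φ ih =>
    intro T
    constructor
    · simp only [FSModel.sat]
      constructor
      · intro h
        exact box_mem_char.1 fun v u hTv hcr => (ih u).1.1 (h v hTv u hcr)
      · intro h v hTv u hcr
        exact (ih u).1.2 (box_mem_char.2 h v u hTv hcr)
    · simp only [FSModel.sat]
      constructor
      · intro h
        refine (mem_of_prv_iff T.2.1 (.b5 φ)).2
          (box_mem_char.1 fun v u hTv hcr => ?_)
        exact (ih u).2.1 (h v hTv u hcr)
      · intro h v hTv u hcr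
        have h' := (mem_of_prv_iff T.2.1 (.b5 φ)).1 h
        exact (ih u).2.2 (box_mem_char.2 h' v u hTv hcr)
  | dia φ ih =>
    intro T
    constructor
    · simp only [FSModel.sat]
      constructor
      · rintro ⟨u, hcr, hu⟩
        exact dia_mem_char.1 ⟨u, hcr, (ih u).1.1 hu⟩
      · intro h
        obtain ⟨u, hcr, hu⟩ := dia_mem_char.2 h
        exact ⟨u, hcr, (ih u).1.2 hu⟩
    · simp only [FSModel.sat]
      constructor
      · rintro ⟨u, hcr, hu⟩
        exact (mem_of_prv_iff T.2.1 (.b6 φ)).2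
          (dia_mem_char.1 ⟨u, hcr, (ih u).2.1 hu⟩)
      · intro h
        obtain ⟨u, hcr, hu⟩ := dia_mem_char.2 ((mem_of_prv_iff T.2.1 (.b6 φ)).1 h)
        exact ⟨u, hcr, (ih u).2.2 hu⟩


theorem persist {M : FSModel} : ∀ (φ : MDForm) (b : Bool) {w v : M.W},
    M.le w v → M.sat b φ w → M.sat b φ v := by
  intro φ
  induction φ with
  | atom p =>
    intro b w v h hs
    cases b
    · exact M.Vneg_mono p h hs
    · exact M.Vpos_mono p h hs
  | conj φ ψ ih1 ih2 =>
    intro b w v h hs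
    cases b
    · rcases hs with hs | hs
      · exact Or.inl (ih1 false h hs)
      · exact Or.inr (ih2 false h hs)
    · exact ⟨ih1 true h hs.1, ih2 true h hs.2⟩
  | disj φ ψ ih1 ih2 =>
    intro b w v h hs
    cases b
    · exact ⟨ih1 false h hs.1, ih2 false h hs.2⟩
    · rcases hs with hs | hs
      · exact Or.inl (ih1 true h hs)
      · exact Or.inr (ih2 true h hs)
  | impl φ ψ ih1 ih2 =>
    intro b w v h hs
    cases b
    · intro u hvu hφ
      exact hs u (M.le_trans h hvu) hφ
    · intro u hvu hφ
      exact hs u (M.le_trans h hvu) hφ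
  | neg φ ih =>
    intro b w v h hs
    cases b
    · exact ih true h hs
    · exact ih false h hs
  | box φ ih =>
    intro b w v h hs
    cases b
    · intro u hvu s hRs
      exact hs u (M.le_trans h hvu) s hRs
    · intro u hvu s hRs
      exact hs u (M.le_trans h hvu) s hRs
  | dia φ ih =>
    intro b w v h hs
    cases b
    · obtain ⟨u, hRu, hu⟩ := hs
      obtain ⟨u', hRu', huu'⟩ := M.fs1 h hRu
      exact ⟨u', hRu', ih false huu' hu⟩
    · obtain ⟨u, hRu, hu⟩ := hs
      obtain ⟨u', hRu', huu'⟩ := M.fs1 h hRu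
      exact ⟨u', hRu', ih true huu' hu⟩

theorem prov_sound {φ : MDForm} (h : CnKProv φ) : CnKvalid φ := by
  induction h with
  | a1 φ ψ =>
    intro M w v hwv hφ u hvu hψ
    exact persist φ true hvu hφ
  | a2 φ ψ χ =>
    intro M w v hwv h12 u hvu h2 t hut hφ
    exact h12 t (M.le_trans hvu hut) hφ t (M.le_refl t) (h2 t hut hφ)
  | a3 φ ψ => intro M w v hwv h; exact h.1
  | a4 φ ψ => intro M w v hwv h; exact h.2
  | a5 φ ψ =>
    intro M w v hwv hφ u hvu hψ
    exact ⟨persist φ true hvu hφ, hψ⟩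
  | a6 φ ψ => intro M w v hwv h; exact Or.inl h
  | a7 φ ψ => intro M w v hwv h; exact Or.inr h
  | a8 φ ψ χ =>
    intro M w v hwv h1 u hvu h2 t hut h3
    rcases h3 with h3 | h3
    · exact h1 t (M.le_trans hvu hut) h3
    · exact h2 t hut h3
  | a9 φ => exact fun M w => ⟨fun v _ h => h, fun v _ h => h⟩
  | a10 φ ψ => exact fun M w => ⟨fun v _ h => h, fun v _ h => h⟩
  | a11 φ ψ => exact fun M w => ⟨fun v _ h => h, fun v _ h => h⟩
  | a12 φ ψ => exact fun M w => ⟨fun v _ h => h, fun v _ h => h⟩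
  | b1 φ ψ =>
    intro M w v hwv h1 u hvu h2 t hut s hRs
    exact h1 t (M.le_trans hvu hut) s hRs s (M.le_refl s) (h2 t hut s hRs)
  | b2 φ ψ =>
    intro M w v hwv h1 u hvu h2
    obtain ⟨s, hRs, hφs⟩ := h2
    exact ⟨s, hRs, h1 u hvu s hRs s (M.le_refl s) hφs⟩
  | b3 φ ψ =>
    intro M w v hwv h
    obtain ⟨s, hRs, hd⟩ := h
    rcases hd with hd | hd
    · exact Or.inl ⟨s, hRs, hd⟩
    · exact Or.inr ⟨s, hRs, hd⟩
  | b4 φ ψ =>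
    intro M w v hwv himp t hvt s hRts s' hss' hφs'
    obtain ⟨t', htt', hRt's'⟩ := M.fs2 hRts hss'
    exact himp t' (M.le_trans hvt htt') ⟨s', hRt's', hφs'⟩ t' (M.le_refl t')
      s' hRt's'
  | b5 φ => exact fun M w => ⟨fun v _ h => h, fun v _ h => h⟩
  | b6 φ => exact fun M w => ⟨fun v _ h => h, fun v _ h => h⟩
  | mp h1 h2 ih1 ih2 =>
    intro M w
    exact ih1 M w w (M.le_refl w) (ih2 M w)
  | nec h ih =>
    intro M w v hwv u hvu
    exact ih M u

theorem deriv_sound {Γ : Set MDForm} {φ : MDForm} (h : CnKDeriv Γ φ)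
    {M : FSModel} {w : M.W} (hΓ : ∀ γ ∈ Γ, M.sat true γ w) : M.sat true φ w := by
  induction h with
  | mem h' => exact hΓ _ h'
  | prov h' => exact prov_sound h' M w
  | mp _ _ ih1 ih2 => exact ih1 w (M.le_refl w) ih2

theorem sat_disjList {M : FSModel} {w : M.W} : ∀ {θ : MDForm} {l : List MDForm},
    M.sat true (MDForm.disjList θ l) w →
    M.sat true θ w ∨ ∃ χ ∈ l, M.sat true χ w := by
  intro θ l
  induction l generalizing θ with
  | nil => exact fun h => Or.inl h
  | cons ψ l ih =>
    rintro (h | h)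
    · exact Or.inl h
    · rcases ih h with h' | ⟨χ, hχ, h'⟩
      · exact Or.inr ⟨ψ, List.mem_cons_self, h'⟩
      · exact Or.inr ⟨χ, List.mem_cons_of_mem _ hχ, h'⟩

theorem prv_or_mono {A B C : MDForm} (h : CnKProv (A.impl B)) :
    CnKProv ((C.disj A).impl (C.disj B)) :=
  deriv_empty (ded (dor_elim (.mem (Set.mem_insert _ _))
    (.prov (.a6 _ _)) (.prov (prv_imp_trans h (.a7 _ _)))))

theorem prv_disjList_append : ∀ (l₁ : List MDForm) (θ₁ : MDForm) (r : List MDForm),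
    CnKProv ((MDForm.disjList θ₁ l₁).impl (MDForm.disjList θ₁ (l₁ ++ r)))
  | [], θ₁, [] => prv_id _
  | [], θ₁, ψ :: r => .a6 _ _
  | ψ :: l, θ₁, r => prv_or_mono (prv_disjList_append l ψ r)

theorem prv_disjList_suffix : ∀ (l₁ : List MDForm) (θ₁ θ₂ : MDForm) (l₂ : List MDForm),
    CnKProv ((MDForm.disjList θ₂ l₂).impl (MDForm.disjList θ₁ (l₁ ++ θ₂ :: l₂)))
  | [], θ₁, θ₂, l₂ => .a7 _ _
  | ψ :: l, θ₁, θ₂, l₂ =>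
    prv_imp_trans (prv_disjList_suffix l ψ θ₂ l₂) (.a7 _ _)

theorem prv_disjList_idem {φ : MDForm} : ∀ {l : List MDForm}, (∀ χ ∈ l, χ = φ) →
    CnKProv ((MDForm.disjList φ l).impl φ)
  | [], _ => prv_id _
  | ψ :: l, h => by
    have hψ : ψ = φ := h ψ (List.mem_cons_self)
    subst hψ
    have ihp := prv_disjList_idem (l := l) fun χ hχ => h χ (List.mem_cons_of_mem _ hχ)
    exact deriv_empty (ded (dor_elim (.mem (Set.mem_insert _ _))
      (.prov (prv_id _)) (.prov ihp)))

theorem completeness_main {Γ Δ : Set MDForm} (h : ¬ CnKturnstile Γ Δ) :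
    ¬ CnKconseq Γ Δ := by
  have hmain := lindenbaum Γ
    (fun χ => ∃ θ l, θ ∈ Δ ∧ (∀ x ∈ l, x ∈ Δ) ∧ χ = MDForm.disjList θ l)
    (by
      rintro χ ⟨θ, l, hθ, hl, rfl⟩ hd
      exact h ⟨θ, l, hθ, hl, hd⟩)
    (by
      rintro _ _ ⟨θ₁, l₁, hθ₁, hl₁, rfl⟩ ⟨θ₂, l₂, hθ₂, hl₂, rfl⟩
      refine ⟨MDForm.disjList θ₁ (l₁ ++ θ₂ :: l₂), ⟨θ₁, l₁ ++ θ₂ :: l₂, hθ₁, ?_, rfl⟩, ?_⟩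
      · intro x hx
        rcases List.mem_append.1 hx with hx | hx
        · exact hl₁ x hx
        · rcases List.mem_cons.1 hx with rfl | hx
          · exact hθ₂
          · exact hl₂ x hx
      · exact deriv_empty (ded (dor_elim (.mem (Set.mem_insert _ _))
          (.prov (prv_disjList_append l₁ θ₁ (θ₂ :: l₂)))
          (.prov (prv_disjList_suffix l₁ θ₁ θ₂ l₂)))))
  obtain ⟨T, hΓT, hTc, hTp, hbad⟩ := hmain
  intro hcon
  have hw : ∀ γ ∈ Γ, canon.sat true γ (⟨T, hTc, hTp⟩ : CWorld) := by
    intro γ hγ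
    exact (truth_lemma γ ⟨T, hTc, hTp⟩).1.2 (hΓT hγ)
  obtain ⟨δ, hδ, hsat⟩ := hcon canon ⟨T, hTc, hTp⟩ hw
  have hδT : δ ∈ T := (truth_lemma δ ⟨T, hTc, hTp⟩).1.1 hsat
  exact hbad δ ⟨δ, [], hδ, by simp, rfl⟩ (.mem hδT)

theorem turnstile_sound {Γ Δ : Set MDForm} (h : CnKturnstile Γ Δ) :
    CnKconseq Γ Δ := by
  obtain ⟨θ, l, hθ, hl, hd⟩ := h
  intro M w hΓ
  have hs : M.sat true (MDForm.disjList θ l) w := deriv_sound hd hΓ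
  rcases sat_disjList hs with h' | ⟨χ, hχ, h'⟩
  · exact ⟨θ, hθ, h'⟩
  · exact ⟨χ, hl χ hχ, h'⟩

end CnKAux

/-- Strong soundness and completeness of CnK. -/
theorem CnK_soundness_completeness :
    (∀ Γ Δ : Set MDForm, CnKconseq Γ Δ ↔ CnKturnstile Γ Δ) ∧
    (∀ φ : MDForm, CnKProv φ ↔ CnKvalid φ) := by
  have main : ∀ Γ Δ : Set MDForm, CnKconseq Γ Δ ↔ CnKturnstile Γ Δ := by
    intro Γ Δ
    constructor
    · intro h
      by_contra h'
      exact CnKAux.completeness_main h' h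
    · exact CnKAux.turnstile_sound
  refine ⟨main, fun φ => ⟨fun h => CnKAux.prov_sound h, fun h => ?_⟩⟩
  have hcon : CnKconseq ∅ {φ} := fun M w _ => ⟨φ, rfl, h M w⟩
  obtain ⟨θ, l, hθ, hl, hd⟩ := (main ∅ {φ}).1 hcon
  rcases hθ with rfl
  have hcol : CnKProv ((MDForm.disjList θ l).impl θ) :=
    CnKAux.prv_disjList_idem fun χ hχ => hl χ hχ
  exact CnKAux.deriv_empty (.mp (.prov hcol) hd)
end

section
/- (Compactness of CnK) For all sets Γ, Δ of MD-formulas: Γ ⊭_CnK Δ if and only if Γ' ⊭_CnK Δ' for all finite Γ' ⊆ Γ and all finite Δ' ⊆ Δ. -/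
open Filter Classical

section Ultra
variable {I : Type} (U : Ultrafilter I) (M : I → FSModel)

/-- The ultraproduct of a family of Fischer–Servi models. -/
noncomputable def ultraModel : FSModel where
  W := ∀ i, (M i).W
  nonempty := ⟨fun i => (M i).nonempty.some⟩
  le f g := ∀ᶠ i in U, (M i).le (f i) (g i)
  le_refl f := Filter.Eventually.of_forall fun i => (M i).le_refl (f i)
  le_trans h1 h2 := (h1.and h2).mono fun i ⟨a, b⟩ => (M i).le_trans a b
  R f g := ∀ᶠ i in U, (M i).R (f i) (g i)
  fs1 := by
    intro f f' g hle hR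
    refine ⟨fun i => if h : (M i).le (f i) (f' i) ∧ (M i).R (f i) (g i) then
        ((M i).fs1 h.1 h.2).choose else g i, ?_, ?_⟩
    · exact (hle.and hR).mono fun i h => by
        simpa [dif_pos h] using ((M i).fs1 h.1 h.2).choose_spec.1
    · exact (hle.and hR).mono fun i h => by
        simpa [dif_pos h] using ((M i).fs1 h.1 h.2).choose_spec.2
  fs2 := by
    intro f g g' hR hle
    refine ⟨fun i => if h : (M i).R (f i) (g i) ∧ (M i).le (g i) (g' i) then
        ((M i).fs2 h.1 h.2).choose else f i, ?_, ?_⟩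
    · exact (hR.and hle).mono fun i h => by
        simpa [dif_pos h] using ((M i).fs2 h.1 h.2).choose_spec.1
    · exact (hR.and hle).mono fun i h => by
        simpa [dif_pos h] using ((M i).fs2 h.1 h.2).choose_spec.2
  Vpos p f := ∀ᶠ i in U, (M i).Vpos p (f i)
  Vneg p f := ∀ᶠ i in U, (M i).Vneg p (f i)
  Vpos_mono p {f g} hle h := (hle.and h).mono fun i ⟨a, b⟩ => (M i).Vpos_mono p a b
  Vneg_mono p {f g} hle h := (hle.and h).mono fun i ⟨a, b⟩ => (M i).Vneg_mono p a b

/-- Łoś's theorem for the ultraproduct of Fischer–Servi models. -/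
theorem los (φ : MDForm) : ∀ (b : Bool) (f : ∀ i, (M i).W),
    (ultraModel U M).sat b φ f ↔ ∀ᶠ i in U, (M i).sat b φ (f i) := by
  induction φ with
  | atom p => intro b f; cases b <;> exact Iff.rfl
  | conj φ ψ ihφ ihψ =>
    intro b f
    cases b
    · show _ ∨ _ ↔ _
      rw [ihφ, ihψ, ← Ultrafilter.eventually_or]; exact Iff.rfl
    · show _ ∧ _ ↔ _
      rw [ihφ, ihψ, ← eventually_and]; exact Iff.rfl
  | disj φ ψ ihφ ihψ =>
    intro b f
    cases b
    · show _ ∧ _ ↔ _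
      rw [ihφ, ihψ, ← eventually_and]; exact Iff.rfl
    · show _ ∨ _ ↔ _
      rw [ihφ, ihψ, ← Ultrafilter.eventually_or]; exact Iff.rfl
  | impl φ ψ ihφ ihψ =>
    intro b f
    constructor
    · intro h
      by_contra hc
      rw [← Ultrafilter.eventually_not] at hc
      have hc' : ∀ᶠ i in U, ∃ v, (M i).le (f i) v ∧ (M i).sat true φ v ∧
          ¬ (M i).sat b ψ v := by
        refine hc.mono fun i hi => ?_
        cases b <;>
          (simp only [FSModel.sat] at hi; push_neg at hi; exact hi)
      set g : ∀ i, (M i).W := fun i =>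
        if h : ∃ v, (M i).le (f i) v ∧ (M i).sat true φ v ∧ ¬ (M i).sat b ψ v then
          h.choose else f i with hg
      have h1 : ∀ᶠ i in U, (M i).le (f i) (g i) ∧ (M i).sat true φ (g i) ∧
          ¬ (M i).sat b ψ (g i) := by
        refine hc'.mono fun i hi => ?_
        simpa [hg, dif_pos hi] using hi.choose_spec
      have hle : (ultraModel U M).le f g := h1.mono fun i hi => hi.1
      have hφ : (ultraModel U M).sat true φ g := (ihφ true g).mpr (h1.mono fun i hi => hi.2.1)
      have hψ : (ultraModel U M).sat b ψ g := by
        cases b <;> exact h g hle hφ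
      have hψ' := (ihψ b g).mp hψ
      obtain ⟨i, hi1, hi2⟩ := (hψ'.and h1).exists
      exact hi2.2.2 hi1
    · intro h
      have key : ∀ g, (ultraModel U M).le f g → (ultraModel U M).sat true φ g →
          (ultraModel U M).sat b ψ g := by
        intro g hle hφ
        refine (ihψ b g).mpr ?_
        have hφ' := (ihφ true g).mp hφ
        refine ((h.and hle).and hφ').mono fun i ⟨⟨h1, h2⟩, h3⟩ => ?_
        cases b <;> exact h1 (g i) h2 h3
      cases b <;> exact key
  | neg φ ihφ =>
    intro b f
    cases b <;> · simp only [FSModel.sat]; apply ihφ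
  | box φ ihφ =>
    intro b f
    constructor
    · intro h
      by_contra hc
      rw [← Ultrafilter.eventually_not] at hc
      have hc' : ∀ᶠ i in U, ∃ v, (M i).le (f i) v ∧ ∃ u, (M i).R v u ∧
          ¬ (M i).sat b φ u := by
        refine hc.mono fun i hi => ?_
        cases b <;>
          (simp only [FSModel.sat] at hi; push_neg at hi; exact hi)
      set P : ∀ i, Prop := fun i => ∃ v, (M i).le (f i) v ∧ ∃ u, (M i).R v u ∧
          ¬ (M i).sat b φ u with hP
      set g : ∀ i, (M i).W := fun i => if h : P i then h.choose else f i with hg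
      set u : ∀ i, (M i).W := fun i =>
        if h : P i then (h.choose_spec.2).choose else f i with hu
      have h1 : ∀ᶠ i in U, (M i).le (f i) (g i) ∧ (M i).R (g i) (u i) ∧
          ¬ (M i).sat b φ (u i) := by
        refine hc'.mono fun i hi => ?_
        have := hi.choose_spec
        have h2 := this.2.choose_spec
        simp only [hg, hu, dif_pos (show P i from hi)]
        exact ⟨this.1, h2.1, h2.2⟩
      have hle : (ultraModel U M).le f g := h1.mono fun i hi => hi.1
      have hR : (ultraModel U M).R g u := h1.mono fun i hi => hi.2.1
      have hφ : (ultraModel U M).sat b φ u := by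
        cases b <;> exact h g hle u hR
      have hφ' := (ihφ b u).mp hφ
      obtain ⟨i, hi1, hi2⟩ := (hφ'.and h1).exists
      exact hi2.2.2 hi1
    · intro h
      have key : ∀ g, (ultraModel U M).le f g → ∀ u, (ultraModel U M).R g u →
          (ultraModel U M).sat b φ u := by
        intro g hle u hR
        refine (ihφ b u).mpr ?_
        refine ((h.and hle).and hR).mono fun i ⟨⟨h1, h2⟩, h3⟩ => ?_
        cases b <;> exact h1 (g i) h2 (u i) h3
      cases b <;> exact key
  | dia φ ihφ =>
    intro b f
    constructor
    · intro h
      have h' : ∃ u, (ultraModel U M).R f u ∧ (ultraModel U M).sat b φ u := by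
        cases b <;> exact h
      obtain ⟨u, hR, hφ⟩ := h'
      have hφ' := (ihφ b u).mp hφ
      refine (hR.and hφ').mono fun i ⟨h1, h2⟩ => ?_
      cases b <;> exact ⟨u i, h1, h2⟩
    · intro h
      have hc' : ∀ᶠ i in U, ∃ u, (M i).R (f i) u ∧ (M i).sat b φ u := by
        refine h.mono fun i hi => ?_
        cases b <;> exact hi
      set u : ∀ i, (M i).W := fun i =>
        if h : ∃ u, (M i).R (f i) u ∧ (M i).sat b φ u then h.choose else f i with hu
      have h1 : ∀ᶠ i in U, (M i).R (f i) (u i) ∧ (M i).sat b φ (u i) := by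
        refine hc'.mono fun i hi => ?_
        simpa [hu, dif_pos hi] using hi.choose_spec
      have key : ∃ v, (ultraModel U M).R f v ∧ (ultraModel U M).sat b φ v :=
        ⟨u, h1.mono fun i hi => hi.1, (ihφ b u).mpr (h1.mono fun i hi => hi.2)⟩
      cases b <;> exact key

end Ultra

/-- Compactness of CnK. -/
theorem CnK_compactness (Γ Δ : Set MDForm) :
    ¬ CnKconseq Γ Δ ↔
      ∀ Γ' ⊆ Γ, Γ'.Finite → ∀ Δ' ⊆ Δ, Δ'.Finite → ¬ CnKconseq Γ' Δ' := by
  constructor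
  · intro h Γ' hΓ' _ Δ' hΔ' _ hc
    apply h
    intro M w hprem
    obtain ⟨δ, hδ, hsat⟩ := hc M w fun γ hγ => hprem γ (hΓ' hγ)
    exact ⟨δ, hΔ' hδ, hsat⟩
  · intro h hc
    classical
    set I : Type := Finset MDForm × Finset MDForm with hI
    have key : ∀ i : I, ∃ (M : FSModel) (w : M.W),
        (∀ γ ∈ Γ ∩ ↑i.1, M.sat true γ w) ∧ ∀ δ ∈ Δ ∩ ↑i.2, ¬ M.sat true δ w := by
      intro i
      have := h (Γ ∩ ↑i.1) Set.inter_subset_left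
        (Set.Finite.inter_of_right i.1.finite_toSet Γ)
        (Δ ∩ ↑i.2) Set.inter_subset_left
        (Set.Finite.inter_of_right i.2.finite_toSet Δ)
      unfold CnKconseq at this
      push_neg at this
      obtain ⟨M, w, h1, h2⟩ := this
      exact ⟨M, w, h1, fun δ hδ => h2 δ hδ⟩
    choose M w hpos hneg using key
    have : Filter.NeBot (Filter.atTop : Filter I) := Filter.atTop_neBot
    set U : Ultrafilter I := Ultrafilter.of Filter.atTop with hU
    have hatTop : (U : Filter I) ≤ Filter.atTop := Ultrafilter.of_le _
    set N := ultraModel U M with hN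
    apply absurd (hc N w)
    push_neg
    constructor
    · intro γ hγ
      rw [los]
      exact hatTop (Filter.eventually_atTop.mpr
        ⟨({γ}, ∅), fun i hi => hpos i γ ⟨hγ, hi.1 (Finset.mem_singleton_self γ)⟩⟩)
    · intro δ hδ hsat
      rw [los] at hsat
      have hbad : ∀ᶠ i in U, ¬ (M i).sat true δ (w i) := by
        exact hatTop (Filter.eventually_atTop.mpr
          ⟨(∅, {δ}), fun i hi => hneg i δ ⟨hδ, hi.2 (Finset.mem_singleton_self δ)⟩⟩)
      obtain ⟨i, h1, h2⟩ := (hsat.and hbad).exists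
      exact h2 h1
end

section
/- In CnK, the strict implication →ₛ is fully hyperconnexive: for all MD-formulas φ, ψ, the formulas ¬(¬φ→ₛφ), (φ→ₛ¬ψ)→ₛ¬(φ→ₛψ), and ¬(φ→ₛψ)→ₛ(φ→ₛ¬ψ) are CnK-valid, the consecutions {φ→ₛ¬ψ} ⊨_CnK {¬(φ→ₛψ)} and {¬(φ→ₛψ)} ⊨_CnK {φ→ₛ¬ψ} hold, and for distinct atoms p, q, (p→ₛq)→ₛ(q→ₛp) ∉ CnK and {p→ₛq} ⊨_CnK {q→ₛp} fails. Moreover, the strong strict implication ⇒ₛ is fully connexive in CnK — ¬(¬φ⇒ₛφ) and (φ⇒ₛ¬ψ)⇒ₛ¬(φ⇒ₛψ) are CnK-valid, {φ⇒ₛ¬ψ} ⊨_CnK {¬(φ⇒ₛψ)} holds, while (p⇒ₛq)⇒ₛ(q⇒ₛp) ∉ CnK and {p⇒ₛq} ⊨_CnK {q⇒ₛp} fails — but neither plainly nor weakly hyperconnexive: ¬(p⇒ₛq)⇒ₛ(p⇒ₛ¬q) ∉ CnK and {¬(p⇒ₛq)} ⊨_CnK {p⇒ₛ¬q} fails. 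-/
/-- Strong implication: `φ ⇒ ψ` abbreviates `(φ→ψ)∧(¬ψ→¬φ)`. -/
def MDForm.sImp (φ ψ : MDForm) : MDForm :=
  MDForm.conj (MDForm.impl φ ψ) (MDForm.impl (MDForm.neg ψ) (MDForm.neg φ))

/-- Strict implication: `φ →ₛ ψ` abbreviates `□(φ→ψ)`. -/
def MDForm.strImp (φ ψ : MDForm) : MDForm := MDForm.box (MDForm.impl φ ψ)

/-- Strong strict implication: `φ ⇒ₛ ψ` abbreviates `□(φ⇒ψ)`. -/
def MDForm.sStrImp (φ ψ : MDForm) : MDForm := MDForm.box (MDForm.sImp φ ψ)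

/-- A one-world model with total relations, positive valuation `P`, empty negative valuation. -/
def unitModel (P : ℕ → Prop) : FSModel where
  W := Unit
  nonempty := ⟨()⟩
  le _ _ := True
  le_refl _ := trivial
  le_trans _ _ := trivial
  R _ _ := True
  fs1 _ _ := ⟨(), trivial, trivial⟩
  fs2 _ _ := ⟨(), trivial, trivial⟩
  Vpos p _ := P p
  Vneg _ _ := False
  Vpos_mono := by intro p w v _ h; exact h
  Vneg_mono := by intro p w v _ h; exact h

/-- →ₛ is fully hyperconnexive in CnK; ⇒ₛ is fully connexive in CnK but
neither plainly nor weakly hyperconnexive. -/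
theorem CnK_strict_implications_connexivity :
    (∀ φ ψ : MDForm,
      CnKvalid (MDForm.neg (MDForm.strImp (MDForm.neg φ) φ)) ∧
      CnKvalid (MDForm.strImp (MDForm.strImp φ (MDForm.neg ψ))
        (MDForm.neg (MDForm.strImp φ ψ))) ∧
      CnKvalid (MDForm.strImp (MDForm.neg (MDForm.strImp φ ψ))
        (MDForm.strImp φ (MDForm.neg ψ))) ∧
      CnKconseq {MDForm.strImp φ (MDForm.neg ψ)} {MDForm.neg (MDForm.strImp φ ψ)} ∧
      CnKconseq {MDForm.neg (MDForm.strImp φ ψ)} {MDForm.strImp φ (MDForm.neg ψ)}) ∧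
    (∀ i j : ℕ, i ≠ j →
      ¬ CnKvalid (MDForm.strImp (MDForm.strImp (MDForm.atom i) (MDForm.atom j))
          (MDForm.strImp (MDForm.atom j) (MDForm.atom i))) ∧
      ¬ CnKconseq {MDForm.strImp (MDForm.atom i) (MDForm.atom j)}
          {MDForm.strImp (MDForm.atom j) (MDForm.atom i)}) ∧
    (∀ φ ψ : MDForm,
      CnKvalid (MDForm.neg (MDForm.sStrImp (MDForm.neg φ) φ)) ∧
      CnKvalid (MDForm.sStrImp (MDForm.sStrImp φ (MDForm.neg ψ))
        (MDForm.neg (MDForm.sStrImp φ ψ))) ∧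
      CnKconseq {MDForm.sStrImp φ (MDForm.neg ψ)} {MDForm.neg (MDForm.sStrImp φ ψ)}) ∧
    (∀ i j : ℕ, i ≠ j →
      ¬ CnKvalid (MDForm.sStrImp (MDForm.sStrImp (MDForm.atom i) (MDForm.atom j))
          (MDForm.sStrImp (MDForm.atom j) (MDForm.atom i))) ∧
      ¬ CnKconseq {MDForm.sStrImp (MDForm.atom i) (MDForm.atom j)}
          {MDForm.sStrImp (MDForm.atom j) (MDForm.atom i)} ∧
      ¬ CnKvalid (MDForm.sStrImp (MDForm.neg (MDForm.sStrImp (MDForm.atom i) (MDForm.atom j)))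
          (MDForm.sStrImp (MDForm.atom i) (MDForm.neg (MDForm.atom j)))) ∧
      ¬ CnKconseq {MDForm.neg (MDForm.sStrImp (MDForm.atom i) (MDForm.atom j))}
          {MDForm.sStrImp (MDForm.atom i) (MDForm.neg (MDForm.atom j))}) := by
  refine ⟨?_, ?_, ?_, ?_⟩
  · -- →ₛ fully hyperconnexive
    intro φ ψ
    refine ⟨?_, ?_, ?_, ?_, ?_⟩
    · intro M w
      exact fun v _ u _ y _ h => h
    · intro M w
      intro v _ u _ x _ hA
      exact hA
    · intro M w
      intro v _ u _ x _ hA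
      exact hA
    · intro M w h
      refine ⟨(MDForm.strImp φ ψ).neg, Set.mem_singleton _, ?_⟩
      exact h (MDForm.strImp φ (MDForm.neg ψ)) (Set.mem_singleton _)
    · intro M w h
      refine ⟨MDForm.strImp φ (MDForm.neg ψ), Set.mem_singleton _, ?_⟩
      exact h ((MDForm.strImp φ ψ).neg) (Set.mem_singleton _)
  · -- →ₛ not symmetric
    intro i j hij
    set M := unitModel (fun n => n = j) with hM
    have hpq : M.sat true (MDForm.strImp (MDForm.atom i) (MDForm.atom j)) () :=
      fun v _ u _ y _ hp => absurd hp hij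
    have hnqp : ¬ M.sat true (MDForm.strImp (MDForm.atom j) (MDForm.atom i)) () := by
      intro h
      exact hij (h () trivial () trivial () trivial rfl)
    constructor
    · intro h
      exact hnqp (h M () () trivial () trivial () trivial hpq)
    · intro h
      obtain ⟨δ, hδ, hsat⟩ := h M () (by rintro γ rfl; exact hpq)
      rw [Set.mem_singleton_iff] at hδ
      subst hδ
      exact hnqp hsat
  · -- ⇒ₛ fully connexive (positive parts)
    intro φ ψ
    refine ⟨?_, ?_, ?_⟩
    · intro M w
      intro v _ u _
      exact Or.inl (fun y _ h => h)
    · intro M w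
      intro v _ u _
      constructor
      · intro x _ hA v' hv' u' hu'
        exact Or.inl ((hA v' hv' u' hu').1)
      · intro x _ hB v' hv' u' hu'
        exact Or.inl ((hB v' hv' u' hu').1)
    · intro M w h
      refine ⟨(MDForm.sStrImp φ ψ).neg, Set.mem_singleton _, ?_⟩
      have hA := h (MDForm.sStrImp φ (MDForm.neg ψ)) (Set.mem_singleton _)
      intro v' hv' u' hu'
      exact Or.inl ((hA v' hv' u' hu').1)
  · -- ⇒ₛ negative parts
    intro i j hij
    set M := unitModel (fun n => n = j) with hM
    have hpq : M.sat true (MDForm.sStrImp (MDForm.atom i) (MDForm.atom j)) () := by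
      intro v _ u _
      exact ⟨fun y _ hp => absurd hp hij, fun y _ hq => hq.elim⟩
    have hnqp : ¬ M.sat true (MDForm.sStrImp (MDForm.atom j) (MDForm.atom i)) () := by
      intro h
      exact hij ((h () trivial () trivial).1 () trivial rfl)
    set M2 := unitModel (fun _ => True) with hM2
    have hneg : M2.sat true (MDForm.neg (MDForm.sStrImp (MDForm.atom i) (MDForm.atom j))) () := by
      intro v _ u _
      exact Or.inr (fun y _ hq => hq.elim)
    have hnpnq : ¬ M2.sat true (MDForm.sStrImp (MDForm.atom i) (MDForm.neg (MDForm.atom j))) () := by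
      intro h
      exact ((h () trivial () trivial).1 () trivial trivial)
    refine ⟨?_, ?_, ?_, ?_⟩
    · intro h
      exact hnqp ((h M () () trivial () trivial).1 () trivial hpq)
    · intro h
      obtain ⟨δ, hδ, hsat⟩ := h M () (by rintro γ rfl; exact hpq)
      rw [Set.mem_singleton_iff] at hδ
      subst hδ
      exact hnqp hsat
    · intro h
      exact hnpnq ((h M2 () () trivial () trivial).1 () trivial hneg)
    · intro h
      obtain ⟨δ, hδ, hsat⟩ := h M2 () (by rintro γ rfl; exact hneg)
      rw [Set.mem_singleton_iff] at hδ
      subst hδ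
      exact hnpnq hsat
end
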